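/- arXiv:1808.01008 — 7 statements merged into one kernel-verified Lean document; each statement's English description precedes it below -/
import Mathlib

section
/- For every integer n ≥ 1, C(n, n−1) = 2^{n−1}. -/
/-! Every component of the meander contributes `2` to `2C + P` if it is a cycle and `1` otherwise,
which never exceeds its number of vertices; hence `2C + P ≤ n`. Equality forces every component to
be an isolated vertex or a doubled edge, that is, `a` and `b` have the same edges. A composition is
recovered from its edges, since its block boundaries are exactly the points crossed by no edge.
So `ind(a,b) = n - 1` holds exactly on the diagonal `a = b`, which has `2^(n-1)` elements. -/

open scoped Classical

/-- Vertices `j` and `k` of `{1,…,n}` (encoded as `Fin n`, vertex `v` is `v+1`) are joined by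
an edge determined by the composition `a`. -/
def CompEdge {n : ℕ} (a : Composition n) (j k : Fin n) : Prop :=
  j ≠ k ∧ ∃ i : Fin a.length,
    a.sizeUpTo i < (j : ℕ) + 1 ∧ (j : ℕ) + 1 ≤ a.sizeUpTo (i + 1) ∧
    a.sizeUpTo i < (k : ℕ) + 1 ∧ (k : ℕ) + 1 ≤ a.sizeUpTo (i + 1) ∧
    ((j : ℕ) + 1) + ((k : ℕ) + 1) = 2 * a.sizeUpTo i + a.blocksFun i + 1

lemma CompEdge.symm {n : ℕ} {a : Composition n} {j k : Fin n} (h : CompEdge a j k) :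
    CompEdge a k j := by
  obtain ⟨hne, i, h1, h2, h3, h4, h5⟩ := h
  exact ⟨hne.symm, i, h3, h4, h1, h2, by omega⟩

/-- The meander `M(a|b)` of the pair of compositions `(a, b)` of `n`. -/
def Meander {n : ℕ} (a b : Composition n) : SimpleGraph (Fin n) where
  Adj j k := CompEdge a j k ∨ CompEdge b j k
  symm := by
    constructor
    intro j k h
    rcases h with h | h
    · exact Or.inl h.symm
    · exact Or.inr h.symm
  loopless := by
    constructor
    intro j h
    rcases h with ⟨hne, _⟩ | ⟨hne, _⟩ <;> exact hne rfl

/-- A connected component of the meander is a cycle if each of its vertices is incident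
to both a top edge and a bottom edge. -/
def IsCycleComp {n : ℕ} (a b : Composition n) (c : (Meander a b).ConnectedComponent) : Prop :=
  ∀ v : Fin n, (Meander a b).connectedComponentMk v = c →
    (∃ w, CompEdge a v w) ∧ (∃ w, CompEdge b v w)

/-- The number of cycle components of the meander `M(a|b)`. -/
noncomputable def cycleCount {n : ℕ} (a b : Composition n) : ℕ :=
  Nat.card {c : (Meander a b).ConnectedComponent // IsCycleComp a b c}

/-- The number of path components of the meander `M(a|b)`. -/
noncomputable def pathCount {n : ℕ} (a b : Composition n) : ℕ :=
  Nat.card {c : (Meander a b).ConnectedComponent // ¬ IsCycleComp a b c}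

/-- The index `ind(a,b) = 2C + P - 1` of a pair of compositions of `n`. -/
noncomputable def seaweedInd {n : ℕ} (a b : Composition n) : ℕ :=
  2 * cycleCount a b + pathCount a b - 1

/-- `C(n,k)`: the number of ordered pairs of compositions of `n` of index `k`. -/
noncomputable def Cnk (n k : ℕ) : ℕ :=
  Nat.card {p : Composition n × Composition n // seaweedInd p.1 p.2 = k}

namespace Composition

variable {n : ℕ} (a : Composition n)

theorem index_eq_iff {v : Fin n} {i : Fin a.length} :
    a.index v = i ↔ a.sizeUpTo i ≤ v ∧ (v : ℕ) < a.sizeUpTo (i + 1) := by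
  rw [eq_comm, ← mem_range_embedding_iff', mem_range_embedding_iff, Nat.succ_eq_add_one]

theorem compEdge_iff {j k : Fin n} :
    CompEdge a j k ↔ j ≠ k ∧ a.index j = a.index k ∧
      (j : ℕ) + k + 1 = 2 * a.sizeUpTo (a.index j) + a.blocksFun (a.index j) := by
  constructor
  · rintro ⟨hne, i, hj₁, hj₂, hk₁, hk₂, hsum⟩
    obtain rfl := (a.index_eq_iff (v := j) (i := i)).2 ⟨by omega, by omega⟩
    exact ⟨hne, ((a.index_eq_iff (v := k)).2 ⟨by omega, by omega⟩).symm, by omega⟩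
  · rintro ⟨hne, hidx, hsum⟩
    obtain ⟨hj₁, hj₂⟩ := (a.index_eq_iff (v := j)).1 rfl
    obtain ⟨hk₁, hk₂⟩ := (a.index_eq_iff (v := k)).1 hidx.symm
    exact ⟨hne, a.index j, by omega, by omega, by omega, by omega, by omega⟩

theorem compEdge_unique {v w w' : Fin n} (h : CompEdge a v w) (h' : CompEdge a v w') :
    w = w' := by
  rw [compEdge_iff] at h h'
  exact Fin.ext (by omega)

theorem exists_compEdge_of_two_le_blocksFun {i : Fin a.length} (hi : 2 ≤ a.blocksFun i) :
    ∃ j k : Fin n,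
      CompEdge a j k ∧ (j : ℕ) = a.sizeUpTo i ∧ (k : ℕ) + 1 = a.sizeUpTo (i + 1) := by
  have hsucc := a.sizeUpTo_succ' i
  have hn := a.sizeUpTo_le (i + 1)
  refine ⟨⟨a.sizeUpTo i, by omega⟩, ⟨a.sizeUpTo (i + 1) - 1, by omega⟩,
    ⟨fun h => ?_, i, ?_⟩, rfl, by dsimp only; omega⟩
  · rw [Fin.mk.injEq] at h
    omega
  · dsimp only
    omega

theorem mem_boundaries_iff {t : Fin (n + 1)} :
    t ∈ a.boundaries ↔ ∃ i : Fin (a.length + 1), a.sizeUpTo i = t := by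
  simp [boundaries, boundary, Fin.ext_iff]

theorem mem_boundaries_iff_forall_compEdge {t : Fin (n + 1)} :
    t ∈ a.boundaries ↔ ∀ v w : Fin n, CompEdge a v w → (v : ℕ) < t → (w : ℕ) < t := by
  rw [mem_boundaries_iff]
  constructor
  · rintro ⟨i, hi⟩ v w hvw hv
    obtain ⟨-, hidx, -⟩ := (a.compEdge_iff).1 hvw
    obtain ⟨hv₁, -⟩ := (a.index_eq_iff (v := v)).1 rfl
    obtain ⟨-, hw₂⟩ := (a.index_eq_iff (v := w)).1 hidx.symm
    have hlt : (a.index v : ℕ) < i := by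
      by_contra! hle
      have := a.monotone_sizeUpTo hle
      omega
    have := a.monotone_sizeUpTo (show (a.index v : ℕ) + 1 ≤ i by omega)
    omega
  · intro hcross
    by_contra! hnot
    have htn : (t : ℕ) < n := by
      refine lt_of_le_of_ne (Nat.le_of_lt_succ t.2) fun htn => hnot (Fin.last _) ?_
      simp [htn]
    obtain ⟨i, hi⟩ : ∃ i, a.index ⟨t, htn⟩ = i := ⟨_, rfl⟩
    obtain ⟨ht₁, ht₂⟩ := (a.index_eq_iff).1 hi
    dsimp only at ht₁ ht₂
    have ht₁ : a.sizeUpTo i < t := lt_of_le_of_ne ht₁ (hnot ⟨i, by omega⟩)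
    have hsucc := a.sizeUpTo_succ' i
    obtain ⟨j, k, hjk, hj, hk⟩ :=
      a.exists_compEdge_of_two_le_blocksFun (i := i) (by omega)
    have := hcross j k hjk (by omega)
    omega

theorem eq_of_compEdge_iff {a b : Composition n} (h : ∀ v w, CompEdge a v w ↔ CompEdge b v w) :
    a = b := by
  refine (compositionEquiv n).injective (CompositionAsSet.ext (Finset.ext fun t => ?_))
  change t ∈ a.boundaries ↔ t ∈ b.boundaries
  simp only [mem_boundaries_iff_forall_compEdge, h]

end Composition

namespace SimpleGraph

variable {V : Type*} {G : SimpleGraph V}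

theorem sum_card_supp_toFinset [Fintype V] [DecidableEq V] [DecidableRel G.Adj] :
    ∑ c : G.ConnectedComponent, c.supp.toFinset.card = Fintype.card V := by
  rw [← Finset.card_univ, Finset.card_eq_sum_card_fiberwise (f := G.connectedComponentMk)
    (fun _ _ => Finset.mem_univ _)]
  refine Finset.sum_congr rfl fun c _ => congrArg Finset.card ?_
  ext v
  simp [ConnectedComponent.mem_supp_iff]

theorem Adj.two_le_card_supp_toFinset [Fintype V] [DecidableEq V] [DecidableRel G.Adj]
    {v w : V} (h : G.Adj v w) : 2 ≤ (G.connectedComponentMk v).supp.toFinset.card :=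
  Finset.one_lt_card.2 ⟨v, by simp, w, by simpa using h.reachable.symm, h.ne⟩

theorem Reachable.mem_of_forall_adj_mem {S : Set V} (hS : ∀ u ∈ S, ∀ x, G.Adj u x → x ∈ S)
    {u x : V} (h : G.Reachable u x) (hu : u ∈ S) : x ∈ S := by
  obtain ⟨p⟩ := h
  induction p with
  | nil => exact hu
  | cons hadj _ ih => exact ih (hS _ hu _ hadj)

end SimpleGraph

section Meander

open SimpleGraph

variable {n : ℕ} {a b : Composition n}

/-- The contribution of a component to `2C + P`. -/
noncomputable def componentWeight (a b : Composition n) (c : (Meander a b).ConnectedComponent) :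
    ℕ :=
  if IsCycleComp a b c then 2 else 1

theorem two_mul_cycleCount_add_pathCount (a b : Composition n) :
    2 * cycleCount a b + pathCount a b = ∑ c, componentWeight a b c := by
  simp only [componentWeight, Finset.sum_ite, Finset.sum_const, smul_eq_mul, mul_one, cycleCount,
    pathCount, Nat.card_eq_fintype_card, Fintype.card_subtype]
  ring

theorem componentWeight_le_card_supp (c : (Meander a b).ConnectedComponent) :
    componentWeight a b c ≤ c.supp.toFinset.card := by
  induction c using ConnectedComponent.ind with | _ v => ?_
  unfold componentWeight
  split_ifs with hcyc
  · obtain ⟨⟨w, hw⟩, -⟩ := hcyc v rfl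
    exact Adj.two_le_card_supp_toFinset (Or.inl hw)
  · exact Finset.card_pos.2 ⟨v, by simp⟩

/-- Only a component made of one doubled edge, or of one isolated vertex, has weight equal to its
size. -/
theorem compEdge_and_compEdge_of_componentWeight_eq {v w : Fin n} (hvw : (Meander a b).Adj v w)
    (h : componentWeight a b ((Meander a b).connectedComponentMk v) =
      ((Meander a b).connectedComponentMk v).supp.toFinset.card) :
    CompEdge a v w ∧ CompEdge b v w := by
  have hcard := hvw.two_le_card_supp_toFinset
  have hcyc : IsCycleComp a b ((Meander a b).connectedComponentMk v) := by
    by_contra hcyc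
    rw [componentWeight, if_neg hcyc] at h
    omega
  rw [componentWeight, if_pos hcyc] at h
  have hsupp : ((Meander a b).connectedComponentMk v).supp.toFinset = {v, w} := by
    refine (Finset.eq_of_subset_of_card_le ?_ (by rw [← h, Finset.card_pair hvw.ne])).symm
    exact Finset.insert_subset (by simp)
      (Finset.singleton_subset_iff.2 (by simpa using hvw.reachable.symm))
  have partner_eq {x : Fin n} (hx : (Meander a b).Adj v x) : x = w := by
    have : x ∈ ((Meander a b).connectedComponentMk v).supp.toFinset := by
      simpa using hx.reachable.symm
    rw [hsupp] at this
    simpa [hx.ne.symm] using this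
  obtain ⟨⟨x, hx⟩, ⟨y, hy⟩⟩ := hcyc v rfl
  obtain rfl := partner_eq (Or.inl hx)
  exact ⟨hx, partner_eq (Or.inr hy) ▸ hy⟩

theorem two_mul_cycleCount_add_pathCount_lt {v w : Fin n}
    (hvw : ¬ (CompEdge a v w ↔ CompEdge b v w)) : 2 * cycleCount a b + pathCount a b < n := by
  have hadj : (Meander a b).Adj v w := by tauto
  calc 2 * cycleCount a b + pathCount a b
      = ∑ c, componentWeight a b c := two_mul_cycleCount_add_pathCount a b
    _ < ∑ c : (Meander a b).ConnectedComponent, c.supp.toFinset.card := by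
      refine Finset.sum_lt_sum (fun c _ => componentWeight_le_card_supp c)
        ⟨(Meander a b).connectedComponentMk v, Finset.mem_univ _,
          lt_of_le_of_ne (componentWeight_le_card_supp _) fun h => ?_⟩
      have := compEdge_and_compEdge_of_componentWeight_eq hadj h
      tauto
    _ = n := by rw [sum_card_supp_toFinset, Fintype.card_fin]

theorem supp_meander_self_of_compEdge {v w : Fin n} (h : CompEdge a v w) :
    ((Meander a a).connectedComponentMk v).supp = {v, w} := by
  have partner {u x : Fin n} (hu : u ∈ ({v, w} : Set (Fin n))) (hx : (Meander a a).Adj u x) :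
      x ∈ ({v, w} : Set (Fin n)) := by
    have hx : CompEdge a u x := hx.elim id id
    rcases hu with rfl | rfl
    · exact Or.inr (a.compEdge_unique hx h)
    · exact Or.inl (a.compEdge_unique hx h.symm)
  ext x
  refine ⟨fun hx => ?_, ?_⟩
  · exact Reachable.mem_of_forall_adj_mem (fun _ hu _ => partner hu)
      (ConnectedComponent.exact hx).symm (Or.inl rfl)
  · rintro (rfl | rfl)
    · rfl
    · exact ConnectedComponent.sound (Adj.reachable (Or.inl h.symm))

theorem supp_meander_self_of_forall_not_compEdge {v : Fin n} (h : ∀ w, ¬ CompEdge a v w) :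
    ((Meander a a).connectedComponentMk v).supp = {v} := by
  ext x
  refine ⟨fun hx => ?_, fun hx => hx ▸ rfl⟩
  refine Reachable.mem_of_forall_adj_mem ?_ (ConnectedComponent.exact hx).symm rfl
  rintro u rfl y hy
  exact absurd (hy.elim id id) (h y)

theorem componentWeight_meander_self (c : (Meander a a).ConnectedComponent) :
    componentWeight a a c = c.supp.toFinset.card := by
  induction c using ConnectedComponent.ind with | _ v => ?_
  by_cases hv : ∃ w, CompEdge a v w
  · obtain ⟨w, hw⟩ := hv
    have hcyc : IsCycleComp a a ((Meander a a).connectedComponentMk v) := by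
      intro u hu
      rw [← ConnectedComponent.mem_supp_iff, supp_meander_self_of_compEdge hw] at hu
      rcases hu with rfl | rfl
      · exact ⟨⟨w, hw⟩, ⟨w, hw⟩⟩
      · exact ⟨⟨v, hw.symm⟩, ⟨v, hw.symm⟩⟩
    simp [componentWeight, if_pos hcyc, supp_meander_self_of_compEdge hw, hw.1]
  · push Not at hv
    have hcyc : ¬ IsCycleComp a a ((Meander a a).connectedComponentMk v) :=
      fun hcyc => (hcyc v rfl).1.elim hv
    simp [componentWeight, if_neg hcyc, supp_meander_self_of_forall_not_compEdge hv]

theorem seaweedInd_eq_sub_one_iff : seaweedInd a b = n - 1 ↔ a = b := by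
  refine ⟨fun hind => Composition.eq_of_compEdge_iff fun v w => ?_, ?_⟩
  · by_contra hvw
    have hlt := two_mul_cycleCount_add_pathCount_lt hvw
    have hne : (v : ℕ) ≠ w := Fin.val_ne_of_ne (show (Meander a b).Adj v w by tauto).ne
    have := v.2
    have := w.2
    unfold seaweedInd at hind
    omega
  · rintro rfl
    rw [seaweedInd, two_mul_cycleCount_add_pathCount,
      Finset.sum_congr rfl fun c _ => componentWeight_meander_self c, sum_card_supp_toFinset,
      Fintype.card_fin]

end Meander

theorem C_n_nsub1_general (n : ℕ) : Cnk n (n - 1) = 2 ^ (n - 1) := by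
  have hdiag (p : Composition n × Composition n) :
      seaweedInd p.1 p.2 = n - 1 ↔ p ∈ Set.diagonal (Composition n) :=
    seaweedInd_eq_sub_one_iff
  rw [Cnk, Nat.card_congr (Equiv.subtypeEquivRight hdiag), ← Set.range_diag,
    Nat.card_range_of_injective fun _ _ h => congrArg Prod.fst h, Nat.card_eq_fintype_card,
    composition_card]

theorem C_n_nsub1 (n : ℕ) (hn : 1 ≤ n) : Cnk n (n - 1) = 2 ^ (n - 1) :=
  C_n_nsub1_general n
end

section
/- For every integer n ≥ 2, C(n, n−2) = n·2^{n−2}. -/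
open scoped Classical

/-!
The `a`-edges and the `b`-edges are two matchings of `{1, …, n}`. Give a component of `M(a|b)`
weight `2` if it is a cycle and `1` if it is a path, so that `2C + P` is the total weight. A
component never has fewer vertices than its weight, and has exactly as many only if it is an
isolated vertex or a doubled edge; a component with one vertex more than its weight is a single
edge, because the edges of one colour cannot cover three vertices. Hence `ind(a,b) = n - 2`, i.e.
total weight `n - 1`, says precisely that one edge set is the other with one edge deleted.

Deleting an edge from the edges of a composition `b` gives the edges of a composition only for
the outer edge of a block of size at least two, and then that composition is `b` with the block
cut just inside both of its ends. So `C(n, n-2)` is twice the number of compositions of `n` with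
a marked block of size at least two. Such a block is determined by its left end `q`, a cut of `b`
with `q + 1` not a cut. Counting the compositions with this property for each `q` gives
`2 ^ (n-2) + (n-2) * 2 ^ (n-3)` marked compositions.
-/

lemma Fintype.sum_eq_one_iff {ι : Type*} [Fintype ι] {f : ι → ℕ} :
    ∑ i, f i = 1 ↔ ∃ i, f i = 1 ∧ ∀ j, j ≠ i → f j = 0 := by
  constructor
  · intro h
    obtain ⟨i, hi⟩ : ∃ i, f i ≠ 0 := by
      by_contra! h0
      simp [h0] at h
    have hle : f i ≤ 1 :=
      h ▸ Finset.single_le_sum (fun j _ => Nat.zero_le (f j)) (Finset.mem_univ i)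
    have hrest := Finset.add_sum_erase Finset.univ f (Finset.mem_univ i)
    refine ⟨i, by omega, fun j hj => ?_⟩
    exact Finset.sum_eq_zero_iff.mp (by omega) j (Finset.mem_erase.mpr ⟨hj, Finset.mem_univ j⟩)
  · rintro ⟨i, hi, hj⟩
    rw [Finset.sum_eq_single i (fun j _ => hj j) (by simp), hi]

section SubsetCounting

variable {α : Type*} [Fintype α] [DecidableEq α]

lemma card_filter_disjoint (s : Finset α) :
    (Finset.univ.filter fun S : Finset α => Disjoint S s).card = 2 ^ (Fintype.card α - s.card) := by
  have : (Finset.univ.filter fun S : Finset α => Disjoint S s) = (Finset.univ \ s).powerset := by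
    ext S
    simp [Finset.subset_sdiff]
  rw [this, Finset.card_powerset, Finset.card_univ_sdiff]

lemma card_filter_mem_and_not_mem {a b : α} (hab : a ≠ b) :
    (Finset.univ.filter fun S : Finset α => a ∈ S ∧ b ∉ S).card = 2 ^ (Fintype.card α - 2) := by
  -- `a ∈ S ∧ b ∉ S` and `a ∉ S ∧ b ∉ S` split `b ∉ S`
  have hsplit := Finset.card_filter_add_card_filter_not
    (s := Finset.univ.filter fun S : Finset α => Disjoint S {b}) (fun S => a ∈ S)
  simp only [Finset.filter_filter, Finset.disjoint_singleton_right] at hsplit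
  have hboth : (Finset.univ.filter fun S : Finset α => b ∉ S ∧ a ∉ S) =
      Finset.univ.filter fun S : Finset α => Disjoint S {a, b} := by
    ext S
    simp [Finset.disjoint_insert_right, and_comm]
  have h1 := card_filter_disjoint ({b} : Finset α)
  simp only [Finset.disjoint_singleton_right, Finset.card_singleton] at h1
  rw [hboth, card_filter_disjoint, Finset.card_pair hab, h1] at hsplit
  have h2 : 2 ≤ Fintype.card α := by
    simpa [Finset.card_pair hab] using Finset.card_le_univ ({a, b} : Finset α)
  have h3 : 2 ^ (Fintype.card α - 1) = 2 * 2 ^ (Fintype.card α - 2) := by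
    rw [← pow_succ']
    congr 1
    omega
  simp only [and_comm] at hsplit
  omega

end SubsetCounting

/-! ### Components of the union of two matchings -/

namespace SimpleGraph

variable {V : Type*} {G : SimpleGraph V}

lemma deleteEdges_singleton_lt {e : Sym2 V} (he : e ∈ G.edgeSet) : G.deleteEdges {e} < G :=
  (G.deleteEdges_le _).lt_of_ne fun h => by
    have := h ▸ he
    simp [edgeSet_deleteEdges] at this

lemma eq_of_deleteEdges_singleton_eq {e e' : Sym2 V} (he : e ∈ G.edgeSet)
    (h : G.deleteEdges {e} = G.deleteEdges {e'}) : e = e' := by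
  by_contra hne
  have : e ∈ (G.deleteEdges {e'}).edgeSet := by
    rw [edgeSet_deleteEdges]
    exact ⟨he, hne⟩
  rw [← h, edgeSet_deleteEdges] at this
  exact this.2 rfl

lemma reachable_iff_eq_or_adj (hG : ∀ v, (G.neighborSet v).Subsingleton) {x y : V} :
    G.Reachable x y ↔ x = y ∨ G.Adj x y := by
  refine ⟨?_, fun h => h.elim (fun h => h ▸ Reachable.refl x) Adj.reachable⟩
  rintro ⟨p⟩
  induction p with
  | nil => exact Or.inl rfl
  | cons h _ ih =>
    rcases ih with rfl | h'
    · exact Or.inr h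
    · exact Or.inl (hG _ h.symm h')

lemma supp_connectedComponentMk (hG : ∀ v, (G.neighborSet v).Subsingleton) (x : V) :
    (G.connectedComponentMk x).supp = insert x (G.neighborSet x) := by
  ext y
  rw [ConnectedComponent.mem_supp_iff, ConnectedComponent.eq, reachable_comm,
    reachable_iff_eq_or_adj hG, Set.mem_insert_iff, eq_comm, mem_neighborSet]

lemma adj_of_supp_eq_pair {c : G.ConnectedComponent} {u v : V} (huv : u ≠ v)
    (hc : c.supp = {u, v}) : G.Adj u v := by
  have hu : u ∈ c.supp := hc ▸ Set.mem_insert u _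
  have hv : v ∈ c.supp := hc ▸ Set.mem_insert_of_mem u rfl
  obtain ⟨p⟩ := ConnectedComponent.eq.mp (hu.trans hv.symm)
  cases p with
  | nil => exact absurd rfl huv
  | cons h _ =>
    have hw := (c.mem_supp_congr_adj h).mp hu
    rw [hc] at hw
    rcases hw with rfl | rfl
    · exact absurd h (G.loopless.irrefl _)
    · exact h

variable [Fintype V] [DecidableEq V]

lemma sum_ncard_supp : ∑ c : G.ConnectedComponent, c.supp.ncard = Fintype.card V := by
  rw [← Finset.card_univ, Finset.card_eq_sum_card_fiberwise (f := G.connectedComponentMk)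
    (t := Finset.univ) (fun _ _ => Finset.mem_univ _)]
  refine Finset.sum_congr rfl fun c _ => ?_
  rw [Set.ncard_eq_toFinset_card']
  congr 1
  ext v
  simp

end SimpleGraph

section TwoColours

open SimpleGraph

variable {V : Type*} {M : SimpleGraph V} (G H : SimpleGraph V)

def IsBicoloredCycle (c : M.ConnectedComponent) : Prop :=
  ∀ v ∈ c.supp, (∃ w, G.Adj v w) ∧ ∃ w, H.Adj v w

noncomputable def cycleWeight (c : M.ConnectedComponent) : ℕ :=
  if IsBicoloredCycle G H c then 2 else 1

lemma cycleWeight_comm (c : M.ConnectedComponent) : cycleWeight G H c = cycleWeight H G c := by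
  simp only [cycleWeight, IsBicoloredCycle, and_comm]
  congr

variable {G H} {c : M.ConnectedComponent}

lemma one_le_cycleWeight : 1 ≤ cycleWeight G H c := by
  unfold cycleWeight
  split_ifs <;> omega

/-- The `G`-edges would pair off the three vertices of the component. -/
lemma not_isBicoloredCycle_of_ncard_supp_eq_three (hG : ∀ v, (G.neighborSet v).Subsingleton)
    (hGM : G ≤ M) (h3 : c.supp.ncard = 3) : ¬ IsBicoloredCycle G H c := by
  intro hcyc
  have hpartner : ∀ p ∈ c.supp, ∃ q ∈ c.supp, q ≠ p ∧ G.Adj p q := fun p hp =>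
    let ⟨⟨q, hq⟩, _⟩ := hcyc p hp
    ⟨q, (c.mem_supp_congr_adj (hGM hq)).mp hp, hq.ne.symm, hq⟩
  obtain ⟨x, y, z, hxy, hxz, hyz, hc⟩ := Set.ncard_eq_three.mp h3
  have key : ∀ q r, q ≠ r → x ≠ r → G.Adj x q → c.supp = {x, q, r} → False := by
    intro q r hqr hxr hxq hc'
    obtain ⟨s, hs, hsr, hrs⟩ := hpartner r (by rw [hc']; simp)
    rw [hc'] at hs
    rcases hs with rfl | rfl | rfl
    · exact hqr (hG s hxq hrs.symm)
    · exact hxr (hG s hxq.symm hrs.symm)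
    · exact hsr rfl
  obtain ⟨q, hq, hqx, hxq⟩ := hpartner x (by rw [hc]; simp)
  rw [hc] at hq
  rcases hq with rfl | rfl | rfl
  · exact hqx rfl
  · exact key q z hyz hxz hxq hc
  · exact key q y hyz.symm hxy hxq (by rw [hc, Set.pair_comm])

lemma exists_supp_eq_pair (hG : ∀ v, (G.neighborSet v).Subsingleton) (hM : M = G ⊔ H)
    (hc : c.supp.ncard = cycleWeight G H c + 1) :
    ∃ u v, c.supp = {u, v} ∧ Xor (G.Adj u v) (H.Adj u v) := by
  unfold cycleWeight at hc
  split_ifs at hc with hcyc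
  · exact absurd hcyc (not_isBicoloredCycle_of_ncard_supp_eq_three hG (hM ▸ le_sup_left) hc)
  obtain ⟨u, v, huv, hsupp⟩ := Set.ncard_eq_two.mp hc
  have hadj : M.Adj u v := adj_of_supp_eq_pair huv hsupp
  rw [hM, sup_adj] at hadj
  refine ⟨u, v, hsupp, ?_⟩
  have hnot : ¬ (G.Adj u v ∧ H.Adj u v) := fun hboth => hcyc fun x hx => by
    rw [hsupp] at hx
    rcases hx with rfl | rfl
    · exact ⟨⟨v, hboth.1⟩, ⟨v, hboth.2⟩⟩
    · exact ⟨⟨u, hboth.1.symm⟩, ⟨u, hboth.2.symm⟩⟩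
  exact (xor_iff_or_and_not_and _ _).mpr ⟨hadj, hnot⟩

lemma eq_deleteEdges_of_supp_eq_pair (hM : M = G ⊔ H) {u v : V} (h₀ : c.supp = {u, v})
    (hHuv : H.Adj u v) (hGuv : ¬ G.Adj u v)
    (hrest : ∀ x y, x ∉ c.supp → M.Adj x y → G.Adj x y ∧ H.Adj x y) :
    G = H.deleteEdges {s(u, v)} := by
  have hGM : G ≤ M := hM ▸ le_sup_left
  have hHM : H ≤ M := hM ▸ le_sup_right
  have hinside : ∀ x y, x ∈ c.supp → M.Adj x y → s(x, y) = s(u, v) := by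
    intro x y hx hxy
    have hy := (c.mem_supp_congr_adj hxy).mp hx
    rw [h₀] at hx hy
    rcases hx with rfl | rfl <;> rcases hy with rfl | rfl
    all_goals first | exact (hxy.ne rfl).elim | rfl | exact Sym2.eq_swap
  ext x y
  rw [deleteEdges_adj, Set.mem_singleton_iff]
  by_cases hx : x ∈ c.supp
  · constructor
    · intro hxy
      exact absurd (by rw [← mem_edgeSet, ← hinside x y hx (hGM hxy)]; exact hxy) hGuv
    · rintro ⟨hxy, hne⟩
      exact absurd (hinside x y hx (hHM hxy)) hne
  · constructor
    · intro hxy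
      refine ⟨(hrest x y hx (hGM hxy)).2, fun h => hx ?_⟩
      rw [h₀]
      exact Sym2.mem_iff.mp (h ▸ Sym2.mem_mk_left x y)
    · rintro ⟨hxy, -⟩
      exact (hrest x y hx (hHM hxy)).1

variable [Finite V]

lemma cycleWeight_le_ncard_supp (hGM : G ≤ M) (c : M.ConnectedComponent) :
    cycleWeight G H c ≤ c.supp.ncard := by
  obtain ⟨v, hv⟩ := c.nonempty_supp
  unfold cycleWeight
  split_ifs with hcyc
  · obtain ⟨⟨w, hw⟩, -⟩ := hcyc v hv
    have hw' : w ∈ c.supp := (c.mem_supp_congr_adj (hGM hw)).mp hv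
    calc 2 = ({v, w} : Set V).ncard := (Set.ncard_pair hw.ne).symm
      _ ≤ c.supp.ncard :=
        Set.ncard_le_ncard (Set.insert_subset hv (Set.singleton_subset_iff.mpr hw'))
  · exact (Set.ncard_pos (Set.toFinite _)).mpr ⟨v, hv⟩

lemma adj_of_ncard_supp_eq_cycleWeight (hM : M = G ⊔ H) (hc : c.supp.ncard = cycleWeight G H c)
    {v w : V} (hv : v ∈ c.supp) (hvw : M.Adj v w) : G.Adj v w ∧ H.Adj v w := by
  have hsub : {v, w} ⊆ c.supp :=
    Set.insert_subset hv (Set.singleton_subset_iff.mpr ((c.mem_supp_congr_adj hvw).mp hv))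
  have h2 : 2 ≤ c.supp.ncard := Set.ncard_pair hvw.ne ▸ Set.ncard_le_ncard hsub
  have hcyc : IsBicoloredCycle G H c := by
    by_contra h
    rw [cycleWeight, if_neg h] at hc
    omega
  rw [cycleWeight, if_pos hcyc] at hc
  have hsupp : c.supp = {v, w} :=
    (Set.eq_of_subset_of_ncard_le hsub (by rw [hc, Set.ncard_pair hvw.ne])).symm
  have hpartner : ∀ x, M.Adj v x → x = w := fun x hx => by
    have hx' := (c.mem_supp_congr_adj hx).mp hv
    rw [hsupp] at hx'
    rcases hx' with rfl | rfl
    · exact (hx.ne rfl).elim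
    · rfl
  obtain ⟨⟨x, hx⟩, ⟨y, hy⟩⟩ := hcyc v hv
  have hGM : G ≤ M := hM ▸ le_sup_left
  have hHM : H ≤ M := hM ▸ le_sup_right
  exact ⟨hpartner x (hGM hx) ▸ hx, hpartner y (hHM hy) ▸ hy⟩

end TwoColours

section TwoMatchings

open SimpleGraph

variable {V : Type*} [Fintype V] [DecidableEq V]

lemma sum_ncard_supp_sub_cycleWeight_deleteEdges {H : SimpleGraph V}
    (hH : ∀ v, (H.neighborSet v).Subsingleton) {u v : V} (he : H.Adj u v) :
    ∑ c : H.ConnectedComponent, (c.supp.ncard - cycleWeight (H.deleteEdges {s(u, v)}) H c) = 1 := by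
  have hG : ∀ x y, H.Adj x y → x ≠ u → x ≠ v → (H.deleteEdges {s(u, v)}).Adj x y :=
    fun x y hxy hxu hxv => deleteEdges_adj.mpr ⟨hxy, fun h =>
      (Sym2.mem_iff.mp ((Set.mem_singleton_iff.mp h) ▸ Sym2.mem_mk_left x y)).elim hxu hxv⟩
  rw [Fintype.sum_eq_one_iff]
  refine ⟨H.connectedComponentMk u, ?_, fun c hc => ?_⟩
  · have hN : H.neighborSet u = {v} :=
      Set.eq_singleton_iff_unique_mem.mpr ⟨he, fun w hw => hH u hw he⟩
    have hpath : ¬ IsBicoloredCycle (H.deleteEdges {s(u, v)}) H (H.connectedComponentMk u) :=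
      fun hcyc => by
        obtain ⟨⟨w, hw⟩, -⟩ := hcyc u rfl
        rw [deleteEdges_adj, hH u hw.1 he] at hw
        exact hw.2 rfl
    rw [supp_connectedComponentMk hH, hN, Set.ncard_pair he.ne, cycleWeight, if_neg hpath]
  obtain ⟨x, rfl⟩ : ∃ x, H.connectedComponentMk x = c := c.exists_rep
  have hxu : x ≠ u := fun h => hc (h ▸ rfl)
  have hxv : x ≠ v := fun h => hc (h ▸ (ConnectedComponent.connectedComponentMk_eq_of_adj he).symm)
  rcases (H.neighborSet x).eq_empty_or_nonempty with hN | ⟨y, hy⟩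
  · rw [supp_connectedComponentMk hH, hN, insert_empty_eq, Set.ncard_singleton]
    exact Nat.sub_eq_zero_of_le one_le_cycleWeight
  have hN : H.neighborSet x = {y} :=
    Set.eq_singleton_iff_unique_mem.mpr ⟨hy, fun w hw => hH x hw hy⟩
  have hcyc : IsBicoloredCycle (H.deleteEdges {s(u, v)}) H (H.connectedComponentMk x) := by
    intro z hz
    rw [supp_connectedComponentMk hH, hN] at hz
    rcases hz with rfl | rfl
    · exact ⟨⟨y, hG z y hy hxu hxv⟩, ⟨y, hy⟩⟩
    · exact ⟨⟨x, (hG x z hy hxu hxv).symm⟩, ⟨x, hy.symm⟩⟩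
  rw [supp_connectedComponentMk hH, hN, Set.ncard_pair hy.ne, cycleWeight, if_pos hcyc]

theorem sum_cycleWeight_add_one_eq_card_iff {M G H : SimpleGraph V} (hM : M = G ⊔ H)
    (hG : ∀ v, (G.neighborSet v).Subsingleton) (hH : ∀ v, (H.neighborSet v).Subsingleton) :
    ∑ c : M.ConnectedComponent, cycleWeight G H c + 1 = Fintype.card V ↔
      (∃ e ∈ H.edgeSet, G = H.deleteEdges {e}) ∨ ∃ e ∈ G.edgeSet, H = G.deleteEdges {e} := by
  have hle : ∀ c : M.ConnectedComponent, cycleWeight G H c ≤ c.supp.ncard :=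
    cycleWeight_le_ncard_supp (hM ▸ le_sup_left)
  have hexcess : ∑ c : M.ConnectedComponent, c.supp.ncard =
      ∑ c : M.ConnectedComponent, cycleWeight G H c +
        ∑ c : M.ConnectedComponent, (c.supp.ncard - cycleWeight G H c) := by
    rw [← Finset.sum_add_distrib]
    exact Finset.sum_congr rfl fun c _ => by have := hle c; omega
  rw [sum_ncard_supp] at hexcess
  rw [hexcess, Nat.add_left_cancel_iff, eq_comm]
  constructor
  · rw [Fintype.sum_eq_one_iff]
    rintro ⟨c₀, h₀, hrest⟩
    obtain ⟨u, v, hsupp, hxor⟩ := exists_supp_eq_pair (c := c₀) hG hM (by have := hle c₀; omega)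
    have hboth : ∀ x y, x ∉ c₀.supp → M.Adj x y → G.Adj x y ∧ H.Adj x y := fun x y hx hxy =>
      adj_of_ncard_supp_eq_cycleWeight hM
        (by have := hrest _ (fun h => hx h); have := hle (M.connectedComponentMk x); omega) rfl hxy
    rcases hxor with ⟨hGuv, hHuv⟩ | ⟨hHuv, hGuv⟩
    · exact Or.inr ⟨s(u, v), hGuv, eq_deleteEdges_of_supp_eq_pair (hM.trans (sup_comm G H))
        hsupp hGuv hHuv fun x y hx hxy => (hboth x y hx hxy).symm⟩
    · exact Or.inl ⟨s(u, v), hHuv, eq_deleteEdges_of_supp_eq_pair hM hsupp hHuv hGuv hboth⟩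
  · rintro (⟨e, he, rfl⟩ | ⟨e, he, rfl⟩) <;> induction e using Sym2.ind with | h u v => ?_
    · obtain rfl : H = M := (hM.trans (sup_eq_right.mpr (H.deleteEdges_le _))).symm
      exact sum_ncard_supp_sub_cycleWeight_deleteEdges hH he
    · obtain rfl : G = M := (hM.trans (sup_eq_left.mpr (G.deleteEdges_le _))).symm
      simp only [cycleWeight_comm G]
      exact sum_ncard_supp_sub_cycleWeight_deleteEdges hG he

end TwoMatchings

/-! ### Cuts, blocks and edges of a composition -/

namespace Composition

variable {n : ℕ}

def IsCut (a : Composition n) (p : ℕ) : Prop := ∃ i, a.sizeUpTo i = p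

/-- The vertices `s, …, t - 1` (numbered from `0`) form one part of `a`. -/
def IsBlock (a : Composition n) (s t : ℕ) : Prop :=
  a.IsCut s ∧ a.IsCut t ∧ s < t ∧ ∀ p, s < p → p < t → ¬ a.IsCut p

variable {a : Composition n}

lemma IsCut.le {p : ℕ} (h : a.IsCut p) : p ≤ n := by
  obtain ⟨i, rfl⟩ := h
  exact a.sizeUpTo_le i

lemma isCut_zero : a.IsCut 0 := ⟨0, a.sizeUpTo_zero⟩

lemma isCut_self : a.IsCut n := ⟨a.length, a.sizeUpTo_length⟩

lemma sizeUpTo_lt_sizeUpTo_succ (i : Fin a.length) : a.sizeUpTo i < a.sizeUpTo (i + 1) :=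
  a.sizeUpTo_strict_mono i.2

lemma sizeUpTo_injective {i j : Fin a.length} (h : a.sizeUpTo i = a.sizeUpTo j) : i = j := by
  rcases lt_trichotomy i j with hij | rfl | hij
  · have := a.monotone_sizeUpTo (show (i : ℕ) + 1 ≤ j from hij)
    have := sizeUpTo_lt_sizeUpTo_succ i
    omega
  · rfl
  · have := a.monotone_sizeUpTo (show (j : ℕ) + 1 ≤ i from hij)
    have := sizeUpTo_lt_sizeUpTo_succ j
    omega

lemma IsCut.exists_eq_sizeUpTo {q : ℕ} (h : a.IsCut q) (hq : q < n) :
    ∃ i : Fin a.length, a.sizeUpTo i = q := by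
  obtain ⟨j, rfl⟩ := h
  refine ⟨⟨j, ?_⟩, rfl⟩
  by_contra! hj
  rw [a.sizeUpTo_ofLength_le j hj] at hq
  exact lt_irrefl _ hq

lemma isCut_iff_mem_boundaries {p : Fin (n + 1)} : a.IsCut p ↔ p ∈ a.boundaries := by
  simp only [boundaries, boundary, Finset.mem_map, Finset.mem_univ, true_and, IsCut,
    RelEmbedding.coe_toEmbedding, OrderEmbedding.coe_ofStrictMono, Fin.ext_iff]
  constructor
  · rintro ⟨i, hi⟩
    rcases le_or_gt i a.length with h | h
    · exact ⟨⟨i, Nat.lt_succ_of_le h⟩, hi⟩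
    · exact ⟨Fin.last _, by rw [← hi, a.sizeUpTo_ofLength_le i h.le]; exact a.sizeUpTo_length⟩
  · rintro ⟨i, hi⟩
    exact ⟨i, hi⟩

lemma ext_of_isCut_iff {b : Composition n} (h : ∀ p, a.IsCut p ↔ b.IsCut p) : a = b :=
  (compositionEquiv n).injective <| CompositionAsSet.ext <| Finset.ext fun p => by
    simpa only [compositionEquiv, Equiv.coe_fn_mk, toCompositionAsSet_boundaries,
      ← isCut_iff_mem_boundaries] using h p

def insertCut (a : Composition n) (p : Fin (n + 1)) : Composition n :=
  CompositionAsSet.toComposition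
    ⟨insert p a.boundaries, Finset.mem_insert_of_mem a.toCompositionAsSet.zero_mem,
      Finset.mem_insert_of_mem a.toCompositionAsSet.getLast_mem⟩

lemma boundaries_insertCut (p : Fin (n + 1)) :
    (a.insertCut p).boundaries = insert p a.boundaries :=
  CompositionAsSet.toComposition_boundaries _

lemma isCut_insertCut {p : Fin (n + 1)} {q : ℕ} :
    (a.insertCut p).IsCut q ↔ a.IsCut q ∨ q = p := by
  rcases le_or_gt q n with hq | hq
  · have key := @isCut_iff_mem_boundaries _ (a.insertCut p) ⟨q, Nat.lt_succ_of_le hq⟩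
    rw [key, boundaries_insertCut, Finset.mem_insert, ← isCut_iff_mem_boundaries, Fin.ext_iff,
      or_comm]
  · exact iff_of_false (fun h => by have := h.le; omega)
      (by rintro (h | rfl) <;> [exact absurd h.le (by omega); exact absurd p.2 (by omega)])

lemma isBlock_sizeUpTo (i : Fin a.length) : a.IsBlock (a.sizeUpTo i) (a.sizeUpTo (i + 1)) := by
  refine ⟨⟨i, rfl⟩, ⟨i + 1, rfl⟩, a.sizeUpTo_strict_mono i.2, ?_⟩
  rintro p hip hpi ⟨j, rfl⟩
  rcases le_or_gt j i with hj | hj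
  · exact absurd (a.monotone_sizeUpTo hj) (by omega)
  · exact absurd (a.monotone_sizeUpTo (show (i : ℕ) + 1 ≤ j from hj)) (by omega)

lemma IsBlock.exists_eq_sizeUpTo {s t : ℕ} (h : a.IsBlock s t) :
    ∃ i : Fin a.length, a.sizeUpTo i = s ∧ a.sizeUpTo (i + 1) = t := by
  obtain ⟨⟨i, rfl⟩, ⟨j, rfl⟩, hlt, hno⟩ := h
  have hi : i < a.length := by
    by_contra! hi
    have := a.sizeUpTo_le j
    rw [a.sizeUpTo_ofLength_le i hi] at hlt
    omega
  have hij : i + 1 ≤ j := by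
    by_contra! hji
    exact absurd (a.monotone_sizeUpTo (Nat.le_of_lt_succ hji)) (by omega)
  refine ⟨⟨i, hi⟩, rfl, ?_⟩
  show a.sizeUpTo (i + 1) = a.sizeUpTo j
  by_contra hne
  have := a.monotone_sizeUpTo hij
  exact hno _ (a.sizeUpTo_strict_mono hi) (by omega) ⟨i + 1, rfl⟩

lemma IsBlock.eq_or_disjoint {s t s' t' : ℕ} (h : a.IsBlock s t) (h' : a.IsBlock s' t') :
    (s = s' ∧ t = t') ∨ t ≤ s' ∨ t' ≤ s := by
  obtain ⟨hs, ht, -, hno⟩ := h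
  obtain ⟨hs', ht', -, hno'⟩ := h'
  by_contra! H
  obtain ⟨hne, hs't, hst'⟩ := H
  have hss' : s = s' := by
    rcases lt_trichotomy s s' with hlt | heq | hlt
    · exact absurd hs' (hno _ hlt hs't)
    · exact heq
    · exact absurd hs (hno' _ hlt hst')
  subst hss'
  rcases lt_trichotomy t t' with hlt | heq | hlt
  · exact hno' _ (by omega) hlt ht
  · exact hne rfl heq
  · exact hno _ (by omega) hlt ht'

lemma exists_isBlock_mem {x : ℕ} (hx : x < n) : ∃ s t, a.IsBlock s t ∧ s ≤ x ∧ x < t := by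
  have hlt := a.lt_sizeUpTo_index_succ ⟨x, hx⟩
  rw [Fin.val_succ] at hlt
  exact ⟨_, _, isBlock_sizeUpTo (a.index ⟨x, hx⟩), a.sizeUpTo_index_le ⟨x, hx⟩, hlt⟩

lemma compEdge_iff_s3 {x y : Fin n} :
    CompEdge a x y ↔
      x ≠ y ∧ ∃ s t, a.IsBlock s t ∧ s ≤ x ∧ (x : ℕ) < t ∧ (x + y + 1 : ℕ) = s + t := by
  constructor
  · rintro ⟨hne, i, h1, h2, -, -, hsum⟩
    have := a.sizeUpTo_succ' i
    exact ⟨hne, _, _, isBlock_sizeUpTo i, by omega, by omega, by omega⟩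
  · rintro ⟨hne, s, t, hb, hsx, hxt, hsum⟩
    obtain ⟨i, rfl, rfl⟩ := hb.exists_eq_sizeUpTo
    have := a.sizeUpTo_succ' i
    exact ⟨hne, i, by omega, by omega, by omega, by omega, by omega⟩

lemma compEdge_of_le_of_le {x y u v : Fin n} (h : CompEdge a x y) (hxu : (x : ℕ) ≤ u)
    (huy : (u : ℕ) ≤ y) (hsum : (u + v : ℕ) = x + y) (huv : u ≠ v) : CompEdge a u v := by
  obtain ⟨-, s, t, hb, hsx, hxt, hxy⟩ := compEdge_iff_s3.mp h
  exact compEdge_iff_s3.mpr ⟨huv, s, t, hb, by omega, by omega, by omega⟩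

lemma isCut_iff_forall_compEdge {p : ℕ} (hp : p ≤ n) :
    a.IsCut p ↔ ∀ x y, CompEdge a x y → ((x : ℕ) < p ↔ (y : ℕ) < p) := by
  constructor
  · intro hcut x y hxy
    obtain ⟨-, s, t, ⟨-, -, -, hno⟩, hsx, hxt, hsum⟩ := compEdge_iff_s3.mp hxy
    constructor <;> intro <;> by_contra <;> exact hno p (by omega) (by omega) hcut
  · intro hno
    by_contra hcut
    have hpn : p < n := lt_of_le_of_ne hp fun h => hcut (h ▸ isCut_self (a := a))
    obtain ⟨s, t, hb, hsp, hpt⟩ := exists_isBlock_mem (a := a) hpn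
    have hsp' : s < p := lt_of_le_of_ne hsp fun h => hcut (h ▸ hb.1)
    have htn := hb.2.1.le
    -- the outer edge of the block around `p` crosses `p`
    have hedge : CompEdge a ⟨s, by omega⟩ ⟨t - 1, by omega⟩ :=
      compEdge_iff_s3.mpr ⟨by simp only [ne_eq, Fin.mk.injEq]; omega, s, t, hb, le_rfl,
        by simp only; omega, by simp only; omega⟩
    have := hno _ _ hedge
    simp only at this
    omega

def edgeGraph (a : Composition n) : SimpleGraph (Fin n) where
  Adj := CompEdge a
  symm := ⟨fun _ _ => CompEdge.symm⟩
  loopless := ⟨fun _ h => h.1 rfl⟩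

lemma edgeGraph_adj {x y : Fin n} : a.edgeGraph.Adj x y ↔ CompEdge a x y := Iff.rfl

lemma meander_eq (a b : Composition n) : Meander a b = a.edgeGraph ⊔ b.edgeGraph := rfl

lemma neighborSet_edgeGraph_subsingleton (v : Fin n) :
    (a.edgeGraph.neighborSet v).Subsingleton := by
  intro x hx y hy
  obtain ⟨-, s, t, hb, hsv, hvt, hx⟩ := compEdge_iff_s3.mp hx
  obtain ⟨-, s', t', hb', hsv', hvt', hy⟩ := compEdge_iff_s3.mp hy
  rcases hb.eq_or_disjoint hb' with ⟨rfl, rfl⟩ | h | h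
  · exact Fin.ext (by omega)
  all_goals omega

lemma edgeGraph_injective : Function.Injective (edgeGraph (n := n)) := by
  intro a b h
  have hedge : CompEdge a = CompEdge b := congrArg SimpleGraph.Adj h
  refine ext_of_isCut_iff fun p => ?_
  rcases le_or_gt p n with hp | hp
  · rw [isCut_iff_forall_compEdge hp, isCut_iff_forall_compEdge hp, hedge]
  · exact iff_of_false (fun h => by have := h.le; omega) (fun h => by have := h.le; omega)

/-! ### Removing the outer edge of a block -/

section SplitBlock

variable {b c : Composition n} {s t : ℕ}

lemma isBlock_of_isCut_iff_of_disjoint (hb : b.IsBlock s t)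
    (hc : ∀ p, c.IsCut p ↔ b.IsCut p ∨ p = s + 1 ∨ p = t - 1) {s' t' : ℕ}
    (hb' : b.IsBlock s' t') (hd : t' ≤ s ∨ t ≤ s') : c.IsBlock s' t' := by
  obtain ⟨hs', ht', hlt, hno⟩ := hb'
  have hst := hb.2.2.1
  refine ⟨(hc s').mpr (Or.inl hs'), (hc t').mpr (Or.inl ht'), hlt, fun p h1 h2 hp => ?_⟩
  rcases (hc p).mp hp with hp | rfl | rfl
  · exact hno p h1 h2 hp
  all_goals omega

lemma isBlock_succ_pred_of_isCut_iff (hb : b.IsBlock s t)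
    (hc : ∀ p, c.IsCut p ↔ b.IsCut p ∨ p = s + 1 ∨ p = t - 1) (hst : s + 1 < t - 1) :
    c.IsBlock (s + 1) (t - 1) := by
  refine ⟨(hc _).mpr (by omega), (hc _).mpr (by omega), hst, fun p h1 h2 hp => ?_⟩
  rcases (hc p).mp hp with hp | rfl | rfl
  · exact hb.2.2.2 p (by omega) (by omega) hp
  all_goals omega

lemma isBlock_cases_of_isCut_iff (hb : b.IsBlock s t) (hst : s + 2 ≤ t)
    (hc : ∀ p, c.IsCut p ↔ b.IsCut p ∨ p = s + 1 ∨ p = t - 1) {s' t' : ℕ}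
    (hc' : c.IsBlock s' t') :
    (b.IsBlock s' t' ∧ (t' ≤ s ∨ t ≤ s')) ∨ (s' = s + 1 ∧ t' = t - 1) ∨ t' = s' + 1 := by
  obtain ⟨hs', ht', hlt, hno⟩ := hc'
  obtain ⟨hs, ht, -, hnob⟩ := hb
  by_cases hd : t' ≤ s ∨ t ≤ s'
  · refine Or.inl ⟨⟨?_, ?_, hlt, fun p h1 h2 hp => hno p h1 h2 ((hc p).mpr (Or.inl hp))⟩, hd⟩
    · rcases (hc s').mp hs' with h | h | h <;> [exact h; omega; omega]
    · rcases (hc t').mp ht' with h | h | h <;> [exact h; omega; omega]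
  push Not at hd
  have hss' : s ≤ s' := by
    by_contra! h
    exact hno s h hd.1 ((hc s).mpr (Or.inl hs))
  have ht't : t' ≤ t := by
    by_contra! h
    exact hno t hd.2 h ((hc t).mpr (Or.inl ht))
  have hs'_cases : s' = s ∨ s' = s + 1 ∨ s' = t - 1 := by
    rcases (hc s').mp hs' with h | h | h
    · exact Or.inl (by by_contra hne; exact hnob s' (by omega) hd.2 h)
    all_goals omega
  have ht'_cases : t' = t ∨ t' = s + 1 ∨ t' = t - 1 := by
    rcases (hc t').mp ht' with h | h | h
    · exact Or.inl (by by_contra hne; exact hnob t' hd.1 (by omega) h)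
    all_goals omega
  have h1 : ¬ (s' < s + 1 ∧ s + 1 < t') := fun h => hno _ h.1 h.2 ((hc _).mpr (by omega))
  have h2 : ¬ (s' < t - 1 ∧ t - 1 < t') := fun h => hno _ h.1 h.2 ((hc _).mpr (by omega))
  omega

lemma compEdge_iff_of_isCut_iff (hb : b.IsBlock s t) (hst : s + 2 ≤ t)
    (hc : ∀ p, c.IsCut p ↔ b.IsCut p ∨ p = s + 1 ∨ p = t - 1) {x y : Fin n} :
    CompEdge c x y ↔
      CompEdge b x y ∧ ¬((x : ℕ) = s ∧ (y : ℕ) = t - 1) ∧ ¬((x : ℕ) = t - 1 ∧ (y : ℕ) = s) := by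
  constructor
  · rintro h
    obtain ⟨hne, s', t', hc', hsx, hxt, hsum⟩ := compEdge_iff_s3.mp h
    rcases isBlock_cases_of_isCut_iff hb hst hc hc' with ⟨hb', hd⟩ | ⟨rfl, rfl⟩ | rfl
    · exact ⟨compEdge_iff_s3.mpr ⟨hne, s', t', hb', hsx, hxt, hsum⟩, by omega, by omega⟩
    · exact ⟨compEdge_iff_s3.mpr ⟨hne, s, t, hb, by omega, by omega, by omega⟩, by omega, by omega⟩
    · exact absurd (Fin.ext (by omega)) hne
  · rintro ⟨h, hno1, hno2⟩
    obtain ⟨hne, s', t', hb', hsx, hxt, hsum⟩ := compEdge_iff_s3.mp h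
    rcases hb.eq_or_disjoint hb' with ⟨rfl, rfl⟩ | hd | hd
    · exact compEdge_iff_s3.mpr ⟨hne, s + 1, t - 1,
        isBlock_succ_pred_of_isCut_iff hb hc (by omega), by omega, by omega, by omega⟩
    all_goals exact compEdge_iff_s3.mpr ⟨hne, s', t',
        isBlock_of_isCut_iff_of_disjoint hb hc hb' (by omega), hsx, hxt, hsum⟩

end SplitBlock

variable {b : Composition n}

def outerEdge (b : Composition n) (i : Fin b.length) : Sym2 (Fin n) :=
  s(⟨b.sizeUpTo i, (sizeUpTo_lt_sizeUpTo_succ i).trans_le (b.sizeUpTo_le _)⟩,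
    ⟨b.sizeUpTo (i + 1) - 1, by
      have := b.sizeUpTo_le (i + 1); have := sizeUpTo_lt_sizeUpTo_succ i; omega⟩)

def splitOuter (b : Composition n) (i : Fin b.length) : Composition n :=
  (b.insertCut ⟨b.sizeUpTo i + 1, by
      have := b.sizeUpTo_le (i + 1); have := sizeUpTo_lt_sizeUpTo_succ i; omega⟩).insertCut
    ⟨b.sizeUpTo (i + 1) - 1, by have := b.sizeUpTo_le (i + 1); omega⟩

lemma isCut_splitOuter (i : Fin b.length) (p : ℕ) :
    (b.splitOuter i).IsCut p ↔ b.IsCut p ∨ p = b.sizeUpTo i + 1 ∨ p = b.sizeUpTo (i + 1) - 1 := by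
  rw [splitOuter, isCut_insertCut, isCut_insertCut, or_assoc]

lemma outerEdge_mem_edgeSet {i : Fin b.length} (hi : 2 ≤ b.blocksFun i) :
    b.outerEdge i ∈ b.edgeGraph.edgeSet := by
  have := b.sizeUpTo_succ' i
  exact compEdge_iff_s3.mpr ⟨by simp only [ne_eq, Fin.mk.injEq]; omega, _, _, isBlock_sizeUpTo i,
    le_rfl, by simp only; omega, by simp only; omega⟩

lemma edgeGraph_splitOuter {i : Fin b.length} (hi : 2 ≤ b.blocksFun i) :
    (b.splitOuter i).edgeGraph = b.edgeGraph.deleteEdges {b.outerEdge i} := by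
  have := b.sizeUpTo_succ' i
  ext x y
  rw [SimpleGraph.deleteEdges_adj, Set.mem_singleton_iff, outerEdge, Sym2.eq_iff, edgeGraph_adj,
    edgeGraph_adj, compEdge_iff_of_isCut_iff (isBlock_sizeUpTo i) (by omega) (isCut_splitOuter i)]
  simp only [Fin.ext_iff]
  tauto

lemma edgeGraph_splitOuter_lt {i : Fin b.length} (hi : 2 ≤ b.blocksFun i) :
    (b.splitOuter i).edgeGraph < b.edgeGraph :=
  edgeGraph_splitOuter hi ▸ SimpleGraph.deleteEdges_singleton_lt (outerEdge_mem_edgeSet hi)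

lemma splitOuter_injective {i j : Fin b.length} (hi : 2 ≤ b.blocksFun i)
    (hj : 2 ≤ b.blocksFun j) (h : b.splitOuter i = b.splitOuter j) : i = j := by
  have he := SimpleGraph.eq_of_deleteEdges_singleton_eq (e' := b.outerEdge j)
    (outerEdge_mem_edgeSet hi)
    (by rw [← edgeGraph_splitOuter hi, ← edgeGraph_splitOuter hj, h])
  have := b.sizeUpTo_succ' i
  have := b.sizeUpTo_succ' j
  refine sizeUpTo_injective ?_
  rcases Sym2.eq_iff.mp he with ⟨h1, -⟩ | ⟨h1, h2⟩
  · exact congrArg Fin.val h1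
  · simp only [Fin.ext_iff] at h1 h2
    omega

lemma exists_eq_splitOuter {e : Sym2 (Fin n)} (he : e ∈ b.edgeGraph.edgeSet)
    (ha : a.edgeGraph = b.edgeGraph.deleteEdges {e}) :
    ∃ i, 2 ≤ b.blocksFun i ∧ a = b.splitOuter i := by
  induction e using Sym2.ind with | h u v => ?_
  wlog huv : u < v generalizing u v
  · rw [Sym2.eq_swap] at he ha
    exact this v u he ha (lt_of_le_of_ne (not_lt.mp huv) (b.edgeGraph.mem_edgeSet.mp he).ne)
  obtain ⟨-, s, t, hb, hsu, hut, hsum⟩ := compEdge_iff_s3.mp (b.edgeGraph.mem_edgeSet.mp he)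
  obtain ⟨i, rfl, rfl⟩ := hb.exists_eq_sizeUpTo
  have hsucc := b.sizeUpTo_succ' i
  have hi : 2 ≤ b.blocksFun i := by omega
  -- otherwise the outer edge of block `i` survives in `a`, and with it the nested edge `s(u, v)`
  have hout : s(u, v) = b.outerEdge i := by
    by_contra hne
    have houter : b.outerEdge i ∈ a.edgeGraph.edgeSet := by
      rw [ha, SimpleGraph.edgeSet_deleteEdges]
      exact ⟨outerEdge_mem_edgeSet hi, fun h => hne (Set.mem_singleton_iff.mp h).symm⟩
    rw [outerEdge, SimpleGraph.mem_edgeSet] at houter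
    have huv' := compEdge_of_le_of_le houter (u := u) (v := v) hsu (by simp only; omega)
      (by simp only; omega) huv.ne
    rw [← edgeGraph_adj, ha, SimpleGraph.deleteEdges_adj] at huv'
    exact huv'.2 rfl
  exact ⟨i, hi, edgeGraph_injective (by rw [ha, hout, edgeGraph_splitOuter hi])⟩

/-! ### Counting blocks of size at least two -/

lemma two_le_blocksFun_iff (i : Fin b.length) :
    2 ≤ b.blocksFun i ↔ ¬ b.IsCut (b.sizeUpTo i + 1) := by
  have hsucc := b.sizeUpTo_succ' i
  have hpos := b.one_le_blocksFun i
  obtain ⟨-, ht, -, hno⟩ := isBlock_sizeUpTo i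
  constructor
  · exact fun h => hno _ (by omega) (by omega)
  · intro h
    by_contra! h1
    exact h (by rw [show b.sizeUpTo i + 1 = b.sizeUpTo (i + 1) by omega]; exact ht)

noncomputable def bigBlockEquiv (b : Composition n) :
    {i : Fin b.length // 2 ≤ b.blocksFun i} ≃ {q : Fin n // b.IsCut q ∧ ¬ b.IsCut (q + 1)} :=
  Equiv.ofBijective
    (fun i => ⟨⟨b.sizeUpTo i, (sizeUpTo_lt_sizeUpTo_succ i.1).trans_le (b.sizeUpTo_le _)⟩,
      ⟨i, rfl⟩, (two_le_blocksFun_iff i.1).mp i.2⟩)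
    ⟨fun i j h => Subtype.ext (sizeUpTo_injective (congrArg (fun q => (q.1 : ℕ)) h)),
      fun ⟨q, hq, hq1⟩ => by
        obtain ⟨i, hi⟩ := hq.exists_eq_sizeUpTo q.2
        exact ⟨⟨i, (two_le_blocksFun_iff i).mpr (hi ▸ hq1)⟩, Subtype.ext (Fin.ext hi)⟩⟩

def cutSetEquiv (n : ℕ) : Composition n ≃ Finset (Fin (n - 1)) :=
  (compositionEquiv n).trans (compositionAsSetEquiv n)

lemma mem_cutSetEquiv {j : Fin (n - 1)} : j ∈ cutSetEquiv n b ↔ b.IsCut (j + 1) := by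
  simp [cutSetEquiv, compositionEquiv, compositionAsSetEquiv, add_comm,
    ← isCut_iff_mem_boundaries]

lemma card_filter_isCut_and_not_isCut_zero (hn : 2 ≤ n) :
    (Finset.univ.filter fun b : Composition n => b.IsCut 0 ∧ ¬ b.IsCut (0 + 1)).card =
      2 ^ (n - 2) := by
  have h := card_filter_disjoint ({⟨0, by omega⟩} : Finset (Fin (n - 1)))
  rw [Fintype.card_fin, Finset.card_singleton, Nat.sub_sub] at h
  rw [← h]
  refine Finset.card_equiv (cutSetEquiv n) fun b => ?_
  simp [Finset.disjoint_singleton_right, mem_cutSetEquiv, isCut_zero]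

lemma card_filter_isCut_and_not_isCut_of_lt {q : ℕ} (hq : 1 ≤ q) (hqn : q + 2 ≤ n) :
    (Finset.univ.filter fun b : Composition n => b.IsCut q ∧ ¬ b.IsCut (q + 1)).card =
      2 ^ (n - 3) := by
  have h := card_filter_mem_and_not_mem (α := Fin (n - 1)) (a := ⟨q - 1, by omega⟩)
    (b := ⟨q, by omega⟩) (by simp only [ne_eq, Fin.mk.injEq]; omega)
  rw [Fintype.card_fin, Nat.sub_sub] at h
  rw [← h]
  refine Finset.card_equiv (cutSetEquiv n) fun b => ?_
  simp only [Finset.mem_filter, Finset.mem_univ, true_and, mem_cutSetEquiv,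
    Nat.sub_add_cancel hq]

lemma card_filter_isCut_and_not_isCut_of_succ_eq {q : ℕ} (hq : q + 1 = n) :
    (Finset.univ.filter fun b : Composition n => b.IsCut q ∧ ¬ b.IsCut (q + 1)).card = 0 := by
  simp [hq, isCut_self]

/-! ### Pairs of index `n - 2` -/

lemma two_mul_cycleCount_add_pathCount (a b : Composition n) :
    2 * cycleCount a b + pathCount a b =
      ∑ c : (Meander a b).ConnectedComponent, cycleWeight a.edgeGraph b.edgeGraph c := by
  rw [cycleCount, pathCount, Nat.card_eq_fintype_card, Nat.card_eq_fintype_card,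
    Fintype.card_subtype, Fintype.card_subtype]
  simp only [cycleWeight, Finset.sum_ite, Finset.sum_const, smul_eq_mul]
  rw [mul_comm, mul_one]
  congr

lemma seaweedInd_eq_sub_two_iff (hn : 2 ≤ n) (a b : Composition n) :
    seaweedInd a b = n - 2 ↔
      (∃ e ∈ b.edgeGraph.edgeSet, a.edgeGraph = b.edgeGraph.deleteEdges {e}) ∨
        ∃ e ∈ a.edgeGraph.edgeSet, b.edgeGraph = a.edgeGraph.deleteEdges {e} := by
  rw [← sum_cycleWeight_add_one_eq_card_iff (meander_eq a b) neighborSet_edgeGraph_subsingleton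
    neighborSet_edgeGraph_subsingleton, Fintype.card_fin, seaweedInd,
    two_mul_cycleCount_add_pathCount]
  have : 1 ≤ ∑ c : (Meander a b).ConnectedComponent, cycleWeight a.edgeGraph b.edgeGraph c :=
    one_le_cycleWeight.trans (Finset.single_le_sum (fun _ _ => Nat.zero_le _)
      (Finset.mem_univ ((Meander a b).connectedComponentMk ⟨0, by omega⟩)))
  omega

end Composition

section

open Composition

variable {n : ℕ}

abbrev MarkedComposition (n : ℕ) : Type :=
  Σ b : Composition n, {i : Fin b.length // 2 ≤ b.blocksFun i}

def splitPair : MarkedComposition n ⊕ MarkedComposition n → Composition n × Composition n :=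
  Sum.elim (fun x => (x.1.splitOuter x.2, x.1)) (fun x => (x.1, x.1.splitOuter x.2))

lemma splitPair_injective : Function.Injective (splitPair (n := n)) := by
  have hmarked : ∀ {b b' : Composition n} {i : Fin b.length} {i' : Fin b'.length}
      (hi : 2 ≤ b.blocksFun i) (hi' : 2 ≤ b'.blocksFun i'),
      b = b' → b.splitOuter i = b'.splitOuter i' →
        (⟨b, i, hi⟩ : MarkedComposition n) = ⟨b', i', hi'⟩ := by
    rintro b b' i i' hi hi' rfl h
    obtain rfl := splitOuter_injective hi hi' h
    rfl
  have hcross : ∀ {b b' : Composition n} {i : Fin b.length} {i' : Fin b'.length},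
      2 ≤ b.blocksFun i → 2 ≤ b'.blocksFun i' → b.splitOuter i = b' → b = b'.splitOuter i' →
        False := by
    rintro b b' i i' hi hi' rfl h
    have hlt := edgeGraph_splitOuter_lt hi'
    rw [← h] at hlt
    exact lt_asymm (edgeGraph_splitOuter_lt hi) hlt
  rintro (⟨b, i, hi⟩ | ⟨b, i, hi⟩) (⟨b', i', hi'⟩ | ⟨b', i', hi'⟩) h <;>
    simp only [splitPair, Sum.elim_inl, Sum.elim_inr, Prod.mk.injEq] at h
  · exact congrArg Sum.inl (hmarked hi hi' h.2 h.1)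
  · exact (hcross hi hi' h.1 h.2).elim
  · exact (hcross hi' hi h.1.symm h.2.symm).elim
  · exact congrArg Sum.inr (hmarked hi hi' h.1 h.2)

lemma range_splitPair (hn : 2 ≤ n) :
    Set.range (splitPair (n := n)) = {p | seaweedInd p.1 p.2 = n - 2} := by
  ext ⟨a, b⟩
  change _ ↔ seaweedInd a b = n - 2
  rw [seaweedInd_eq_sub_two_iff hn]
  constructor
  · rintro ⟨⟨b', i, hi⟩ | ⟨a', i, hi⟩, h⟩ <;> simp only [splitPair, Sum.elim_inl, Sum.elim_inr,
      Prod.mk.injEq] at h <;> obtain ⟨rfl, rfl⟩ := h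
    · exact Or.inl ⟨_, outerEdge_mem_edgeSet hi, edgeGraph_splitOuter hi⟩
    · exact Or.inr ⟨_, outerEdge_mem_edgeSet hi, edgeGraph_splitOuter hi⟩
  · rintro (⟨e, he, h⟩ | ⟨e, he, h⟩)
    · obtain ⟨i, hi, rfl⟩ := exists_eq_splitOuter he h
      exact ⟨Sum.inl ⟨b, i, hi⟩, rfl⟩
    · obtain ⟨i, hi, rfl⟩ := exists_eq_splitOuter he h
      exact ⟨Sum.inr ⟨a, i, hi⟩, rfl⟩

lemma cnk_sub_two_eq_two_mul (hn : 2 ≤ n) : Cnk n (n - 2) = 2 * Nat.card (MarkedComposition n) := by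
  calc Cnk n (n - 2) = Nat.card (Set.range (splitPair (n := n))) :=
        (Nat.card_congr (Equiv.setCongr (range_splitPair hn))).symm
    _ = 2 * Nat.card (MarkedComposition n) := by
      rw [Nat.card_range_of_injective splitPair_injective, Nat.card_sum, two_mul]

lemma card_markedComposition (hn : 2 ≤ n) :
    Nat.card (MarkedComposition n) = 2 ^ (n - 2) + (n - 2) * 2 ^ (n - 3) := by
  have hcount : Nat.card (MarkedComposition n) = ∑ q ∈ Finset.range n,
      (Finset.univ.filter fun b : Composition n => b.IsCut q ∧ ¬ b.IsCut (q + 1)).card := by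
    rw [Nat.card_sigma]
    simp only [Nat.card_congr (bigBlockEquiv _), Nat.card_eq_fintype_card, Fintype.card_subtype,
      Finset.card_filter]
    rw [Finset.sum_comm]
    exact Fin.sum_univ_eq_sum_range (fun q => ∑ b : Composition n,
      if b.IsCut q ∧ ¬ b.IsCut (q + 1) then 1 else 0) n
  obtain ⟨m, rfl⟩ : ∃ m, n = m + 2 := ⟨n - 2, by omega⟩
  rw [hcount, Finset.sum_range_succ', Finset.sum_range_succ,
    card_filter_isCut_and_not_isCut_zero hn,
    card_filter_isCut_and_not_isCut_of_succ_eq rfl,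
    Finset.sum_congr rfl fun q hq => card_filter_isCut_and_not_isCut_of_lt (q := q + 1) le_add_self
      (by simp only [Finset.mem_range] at hq; omega)]
  simp only [Finset.sum_const, Finset.card_range, smul_eq_mul, add_zero, Nat.add_sub_cancel]
  ring

end

theorem C_n_nsub2 (n : ℕ) (hn : 2 ≤ n) : Cnk n (n - 2) = n * 2 ^ (n - 2) := by
  rw [cnk_sub_two_eq_two_mul hn, card_markedComposition hn]
  obtain ⟨m, rfl⟩ : ∃ m, n = m + 2 := ⟨n - 2, by omega⟩
  rcases m with _ | k
  · rfl
  · rw [show k + 1 + 2 - 2 = k + 1 by omega, show k + 1 + 2 - 3 = k by omega, pow_succ]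
    ring
end

section
/- Let a, b be positive integers and n = a + b. Then ind((a,b), (n)) = gcd(a,b) − 1, where (a,b) and (n) are the two-part and one-part compositions of n respectively. -/
open scoped Classical

/-- The composition of `n` with the given list of positive parts. -/
def compOfList (n : ℕ) (l : List ℕ) (hpos : ∀ x ∈ l, 0 < x) (hsum : l.sum = n) :
    Composition n :=
  ⟨l, fun hi => hpos _ hi, hsum⟩

/-! With `d = gcd a b`, every meander edge `{v, w}` is a reflection with `d ∣ v + w + 1`, so
`v % d` and `w % d` are exchanged by `r ↦ d - 1 - r`.  Conversely a bottom reflection followed by a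
top reflection rotates `v ↦ v + a (mod a + b)`, and these rotations connect each residue class
mod `d`.  So the components are the orbits of `r ↦ d - 1 - r` on the residues mod `d`: a pair of
classes gives a cycle, and the fixed class (present iff `d` is odd) contains the centre of an odd
block, hence a path end.  Thus `2C + P = d`. -/

theorem compEdge_iff {n : ℕ} {c : Composition n} {j k : Fin n} :
    CompEdge c j k ↔ (j : ℕ) ≠ k ∧ ∃ i < c.length, c.sizeUpTo i ≤ j ∧ j < c.sizeUpTo (i + 1) ∧
      j + k + 1 = c.sizeUpTo i + c.sizeUpTo (i + 1) := by
  unfold CompEdge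
  rw [Fin.exists_iff, Fin.val_ne_iff]
  refine and_congr_right fun _ => exists_congr fun i =>
    ⟨fun ⟨hi, h⟩ => ?_, fun ⟨hi, h⟩ => ⟨hi, ?_⟩⟩
  all_goals
    have := c.sizeUpTo_succ' ⟨i, hi⟩
    simp only at this h ⊢
    omega

theorem compEdge_iff_of_blocks_eq_singleton {n : ℕ} {c : Composition n} (hc : c.blocks = [n])
    {j k : Fin n} : CompEdge c j k ↔ (j : ℕ) ≠ k ∧ j + k + 1 = n := by
  have hlen : c.length = 1 := by simp [Composition.length, hc]
  have h1 : c.sizeUpTo 1 = n := by simp [Composition.sizeUpTo, hc]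
  have hj := j.isLt
  rw [compEdge_iff, hlen]
  refine and_congr_right fun _ => ⟨?_, fun hsum => ⟨0, one_pos, ?_⟩⟩
  · rintro ⟨i, hi, -, -, hsum⟩
    obtain rfl : i = 0 := by omega
    rwa [Composition.sizeUpTo_zero, zero_add, h1] at hsum
  · rw [Composition.sizeUpTo_zero, zero_add, h1]
    omega

theorem compEdge_iff_of_blocks_eq_pair {a b : ℕ} {c : Composition (a + b)}
    (hc : c.blocks = [a, b]) {j k : Fin (a + b)} :
    CompEdge c j k ↔ (j : ℕ) ≠ k ∧ (j + k + 1 = a ∨ j + k + 1 = 2 * a + b) := by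
  have hlen : c.length = 2 := by simp [Composition.length, hc]
  have h1 : c.sizeUpTo 1 = a := by simp [Composition.sizeUpTo, hc]
  have h2 : c.sizeUpTo 2 = a + b := by simp [Composition.sizeUpTo, hc]
  have hj := j.isLt
  have hk := k.isLt
  rw [compEdge_iff, hlen]
  refine and_congr_right fun _ => ⟨?_, ?_⟩
  · rintro ⟨i, hi, -, -, hsum⟩
    interval_cases i
    · rw [Composition.sizeUpTo_zero, zero_add, h1] at hsum; omega
    · rw [h1, h2] at hsum; omega
  · rintro (hsum | hsum)
    · exact ⟨0, two_pos, by rw [Composition.sizeUpTo_zero, h1]; omega⟩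
    · exact ⟨1, one_lt_two, by rw [h1, h2]; omega⟩

theorem exists_compEdge_iff_of_blocks_eq_singleton {n : ℕ} {c : Composition n}
    (hc : c.blocks = [n]) {v : Fin n} : (∃ w, CompEdge c v w) ↔ 2 * v + 1 ≠ n := by
  simp_rw [compEdge_iff_of_blocks_eq_singleton hc]
  have hv := v.isLt
  refine ⟨fun ⟨w, hne, hsum⟩ => by omega, fun h => ⟨⟨n - 1 - v, by omega⟩, by simp only; omega⟩⟩

theorem exists_compEdge_iff_of_blocks_eq_pair {a b : ℕ} {c : Composition (a + b)}
    (hc : c.blocks = [a, b]) {v : Fin (a + b)} :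
    (∃ w, CompEdge c v w) ↔ 2 * v + 1 ≠ a ∧ 2 * v + 1 ≠ 2 * a + b := by
  simp_rw [compEdge_iff_of_blocks_eq_pair hc]
  have hv := v.isLt
  refine ⟨fun ⟨w, hne, hsum⟩ => by omega, fun h => ?_⟩
  rcases lt_or_ge (v : ℕ) a with hva | hva
  · exact ⟨⟨a - 1 - v, by omega⟩, by simp only; omega⟩
  · exact ⟨⟨2 * a + b - 1 - v, by omega⟩, by simp only; omega⟩

theorem Nat.dvd_add_add_one_iff {d x y : ℕ} (hd : 0 < d) :
    d ∣ x + y + 1 ↔ x % d + y % d + 1 = d := by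
  have hsplit : x + y + 1 = (x % d + y % d + 1) + d * (x / d + y / d) := by
    rw [mul_add]; linarith [Nat.mod_add_div x d, Nat.mod_add_div y d]
  have hx := Nat.mod_lt x hd
  have hy := Nat.mod_lt y hd
  rw [hsplit, Nat.dvd_add_left (dvd_mul_right d _)]
  exact ⟨fun h => Nat.eq_of_dvd_of_lt_two_mul (by omega) h (by omega), fun h => by rw [h]⟩

theorem Nat.card_two_mul_add_one_lt (d : ℕ) : Nat.card {m : ℕ // 2 * m + 1 < d} = d / 2 := by
  rw [Nat.card_congr (Equiv.subtypeEquivRight (q := (· < d / 2)) fun m => by omega),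
    Nat.card_congr Fin.equivSubtype.symm, Nat.card_fin]

theorem Nat.card_two_mul_add_one_eq (d : ℕ) : Nat.card {m : ℕ // 2 * m + 1 = d} = d % 2 := by
  rcases Nat.even_or_odd' d with ⟨k, rfl | rfl⟩
  · have : IsEmpty {m : ℕ // 2 * m + 1 = 2 * k} := ⟨fun ⟨m, hm⟩ => by omega⟩
    simp
  · have : Unique {m : ℕ // 2 * m + 1 = 2 * k + 1} := ⟨⟨k, rfl⟩, fun ⟨m, hm⟩ => by simp; omega⟩
    simp

/-- The residue `r % d`, identified with its mirror image `d - 1 - r % d`. -/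
def foldMod (d r : ℕ) : ℕ := min (r % d) (d - 1 - r % d)

section foldMod

variable {d : ℕ}

theorem two_mul_foldMod_add_one_le (hd : 0 < d) (r : ℕ) : 2 * foldMod d r + 1 ≤ d := by
  have := Nat.mod_lt r hd
  unfold foldMod
  omega

theorem foldMod_of_two_mul_add_one_le {r : ℕ} (h : 2 * r + 1 ≤ d) : foldMod d r = r := by
  unfold foldMod
  rw [Nat.mod_eq_of_lt (by omega)]
  omega

theorem foldMod_eq_foldMod_iff (hd : 0 < d) {r s : ℕ} :
    foldMod d r = foldMod d s ↔ r % d = s % d ∨ r % d + s % d + 1 = d := by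
  have := Nat.mod_lt r hd
  have := Nat.mod_lt s hd
  unfold foldMod
  omega

theorem foldMod_eq_of_dvd (hd : 0 < d) {r s : ℕ} (h : d ∣ r + s + 1) :
    foldMod d r = foldMod d s :=
  (foldMod_eq_foldMod_iff hd).2 (Or.inr ((Nat.dvd_add_add_one_iff hd).1 h))

theorem two_mul_foldMod_add_one_eq_iff (hd : 0 < d) {r : ℕ} :
    2 * foldMod d r + 1 = d ↔ d ∣ 2 * r + 1 := by
  rw [two_mul r, Nat.dvd_add_add_one_iff hd]
  have := Nat.mod_lt r hd
  unfold foldMod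
  omega

end foldMod

/-- `x = j + k + 1` for the pairs `{j, k}` mirrored in one of the blocks `[0, a)`, `[a, a + b)`,
`[0, a + b)` (vertices `0`-indexed). -/
def IsMirrorSum (a b x : ℕ) : Prop := x = a ∨ x = 2 * a + b ∨ x = a + b

theorem gcd_dvd_of_isMirrorSum {a b x : ℕ} (h : IsMirrorSum a b x) : Nat.gcd a b ∣ x := by
  have hda := Nat.gcd_dvd_left a b
  have hdb := Nat.gcd_dvd_right a b
  rcases h with rfl | rfl | rfl
  · exact hda
  · exact dvd_add (dvd_mul_of_dvd_right hda 2) hdb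
  · exact dvd_add hda hdb

theorem Composition.pos_of_blocks_eq_pair {n a b : ℕ} {c : Composition n}
    (hc : c.blocks = [a, b]) : 0 < a ∧ 0 < b :=
  ⟨c.one_le_blocks (by simp [hc]), c.one_le_blocks (by simp [hc])⟩

theorem Composition.gcd_pos_of_blocks_eq_pair {n a b : ℕ} {c : Composition n}
    (hc : c.blocks = [a, b]) : 0 < Nat.gcd a b :=
  Nat.gcd_pos_of_pos_left b (pos_of_blocks_eq_pair hc).1

namespace Meander

variable {a b : ℕ} {T B : Composition (a + b)}

theorem adj_iff (hT : T.blocks = [a, b]) (hB : B.blocks = [a + b]) {v w : Fin (a + b)} :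
    (Meander T B).Adj v w ↔ (v : ℕ) ≠ w ∧ IsMirrorSum a b (v + w + 1) := by
  change CompEdge T v w ∨ CompEdge B v w ↔ _
  rw [compEdge_iff_of_blocks_eq_pair hT, compEdge_iff_of_blocks_eq_singleton hB, IsMirrorSum]
  tauto

theorem exists_top_and_bottom_iff (hT : T.blocks = [a, b]) (hB : B.blocks = [a + b])
    {v : Fin (a + b)} :
    ((∃ w, CompEdge T v w) ∧ ∃ w, CompEdge B v w) ↔ ¬IsMirrorSum a b (2 * v + 1) := by
  rw [exists_compEdge_iff_of_blocks_eq_pair hT, exists_compEdge_iff_of_blocks_eq_singleton hB,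
    IsMirrorSum]
  tauto

theorem reachable_of_isMirrorSum (hT : T.blocks = [a, b]) (hB : B.blocks = [a + b])
    {v w : Fin (a + b)} (h : IsMirrorSum a b (v + w + 1)) : (Meander T B).Reachable v w := by
  rcases eq_or_ne v w with rfl | hne
  · rfl
  · exact ((adj_iff hT hB).2 ⟨Fin.val_ne_iff.2 hne, h⟩).reachable

theorem reachable_of_modEq_add (hT : T.blocks = [a, b]) (hB : B.blocks = [a + b])
    {v w : Fin (a + b)} (h : w ≡ v + a [MOD a + b]) : (Meander T B).Reachable v w := by
  have hv := v.isLt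
  have hw := w.isLt
  let u : Fin (a + b) := ⟨a + b - 1 - v, by omega⟩
  have hvu : (Meander T B).Reachable v u :=
    reachable_of_isMirrorSum hT hB (Or.inr (Or.inr (by simp only [u]; omega)))
  refine hvu.trans (reachable_of_isMirrorSum hT hB ?_)
  rw [Nat.ModEq, Nat.mod_eq_of_lt hw] at h
  rcases lt_or_ge (v : ℕ) b with hvb | hvb
  · rw [Nat.mod_eq_of_lt (by omega)] at h
    simp only [u, IsMirrorSum]
    omega
  · rw [show v + a = (v - b) + (a + b) by omega, Nat.add_mod_right,
      Nat.mod_eq_of_lt (by omega)] at h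
    simp only [u, IsMirrorSum]
    omega

theorem reachable_of_modEq_add_mul (hT : T.blocks = [a, b]) (hB : B.blocks = [a + b])
    (s : ℕ) {v w : Fin (a + b)} (h : w ≡ v + s * a [MOD a + b]) :
    (Meander T B).Reachable v w := by
  induction s generalizing w with
  | zero =>
    rw [zero_mul, add_zero] at h
    rw [Fin.ext (h.eq_of_lt_of_lt w.isLt v.isLt)]
  | succ s ih =>
    let u : Fin (a + b) := ⟨(v + s * a) % (a + b), Nat.mod_lt _ v.pos⟩
    refine (ih (w := u) (Nat.mod_modEq _ _)).trans (reachable_of_modEq_add hT hB ?_)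
    calc (w : ℕ) ≡ v + s * a + a [MOD a + b] := by rwa [add_assoc, ← Nat.succ_mul]
      _ ≡ u + a [MOD a + b] := (Nat.mod_modEq _ _).symm.add_right a

theorem reachable_of_mod_eq (hT : T.blocks = [a, b]) (hB : B.blocks = [a + b])
    {v w : Fin (a + b)} (h : v % Nat.gcd a b = w % Nat.gcd a b) :
    (Meander T B).Reachable v w := by
  obtain ⟨ha, hb⟩ := T.pos_of_blocks_eq_pair hT
  set d := Nat.gcd a b
  have hda : d ≤ a := Nat.gcd_le_left b ha
  have hdn : d ∣ a + b := dvd_add (Nat.gcd_dvd_left a b) (Nat.gcd_dvd_right a b)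
  obtain ⟨m, -, hm⟩ := Nat.exists_mul_mod_eq_gcd (k := a + b) (n := a)
    (by rw [Nat.gcd_self_add_right]; omega)
  rw [Nat.gcd_self_add_right] at hm
  have ham : a * m ≡ d [MOD a + b] := hm.trans (Nat.mod_eq_of_lt (by omega)).symm
  have hvw : v ≡ w + (a + b) [MOD d] := h.trans (Nat.modEq_zero_iff_dvd.2 hdn |>.add_left w).symm
  obtain ⟨t, ht⟩ := (Nat.modEq_iff_dvd' (by omega)).1 hvw
  refine reachable_of_modEq_add_mul hT hB (m * t) ?_
  calc (w : ℕ) ≡ w + (a + b) [MOD a + b] := Nat.add_modEq_right.symm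
    _ = v + d * t := by omega
    _ ≡ v + a * m * t [MOD a + b] := (ham.symm.mul_right t).add_left v
    _ = v + m * t * a := by ring

theorem reachable_iff (hT : T.blocks = [a, b]) (hB : B.blocks = [a + b]) {v w : Fin (a + b)} :
    (Meander T B).Reachable v w ↔ foldMod (Nat.gcd a b) v = foldMod (Nat.gcd a b) w := by
  have hd : 0 < Nat.gcd a b := T.gcd_pos_of_blocks_eq_pair hT
  constructor
  · rintro ⟨p⟩
    induction p with
    | nil => rfl
    | cons hadj _ ih =>
      exact (foldMod_eq_of_dvd hd (gcd_dvd_of_isMirrorSum ((adj_iff hT hB).1 hadj).2)).trans ih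
  · rw [foldMod_eq_foldMod_iff hd]
    rintro (h | h)
    · exact reachable_of_mod_eq hT hB h
    · have hv := v.isLt
      let u : Fin (a + b) := ⟨a + b - 1 - v, by omega⟩
      have hvu : v + u + 1 = a + b := by simp only [u]; omega
      have hu := (Nat.dvd_add_add_one_iff hd).1
        (by rw [hvu]; exact gcd_dvd_of_isMirrorSum (Or.inr (Or.inr rfl)))
      exact (reachable_of_isMirrorSum hT hB (Or.inr (Or.inr hvu))).trans
        (reachable_of_mod_eq hT hB (by omega))

theorem exists_two_mul_add_one_isMirrorSum (hT : T.blocks = [a, b])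
    (hd : ¬2 ∣ Nat.gcd a b) : ∃ u : Fin (a + b), IsMirrorSum a b (2 * u + 1) := by
  obtain ⟨ha, hb⟩ := T.pos_of_blocks_eq_pair hT
  by_cases h2a : 2 ∣ a
  · have h2b : ¬2 ∣ b := fun h2b => hd (Nat.dvd_gcd h2a h2b)
    exact ⟨⟨a + (b - 1) / 2, by omega⟩, Or.inr (Or.inl (by simp only; omega))⟩
  · exact ⟨⟨(a - 1) / 2, by omega⟩, Or.inl (by simp only; omega)⟩

theorem isCycleComp_connectedComponentMk_iff (hT : T.blocks = [a, b])
    (hB : B.blocks = [a + b]) {v : Fin (a + b)} :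
    IsCycleComp T B ((Meander T B).connectedComponentMk v) ↔
      2 * foldMod (Nat.gcd a b) v + 1 < Nat.gcd a b := by
  unfold IsCycleComp
  simp_rw [SimpleGraph.ConnectedComponent.eq, reachable_iff hT hB,
    exists_top_and_bottom_iff hT hB]
  set d := Nat.gcd a b
  have hd : 0 < d := T.gcd_pos_of_blocks_eq_pair hT
  have hle := two_mul_foldMod_add_one_le hd v
  constructor
  · intro hcyc
    by_contra hv
    have hvd : d ∣ 2 * v + 1 := (two_mul_foldMod_add_one_eq_iff hd).1 (by omega)
    obtain ⟨u, hu⟩ := exists_two_mul_add_one_isMirrorSum hT fun h2 =>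
      Nat.not_two_dvd_bit1 v (h2.trans hvd)
    have hud := (two_mul_foldMod_add_one_eq_iff hd).2 (gcd_dvd_of_isMirrorSum hu)
    exact hcyc u (by omega) hu
  · intro hv w hwv hw
    have := (two_mul_foldMod_add_one_eq_iff hd).2 (gcd_dvd_of_isMirrorSum hw)
    omega

def componentEquiv (hT : T.blocks = [a, b]) (hB : B.blocks = [a + b]) :
    (Meander T B).ConnectedComponent ≃ {m : ℕ // 2 * m + 1 ≤ Nat.gcd a b} where
  toFun := SimpleGraph.ConnectedComponent.lift
    (fun v => ⟨foldMod (Nat.gcd a b) v, two_mul_foldMod_add_one_le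
      (T.gcd_pos_of_blocks_eq_pair hT) v⟩)
    fun _ _ p _ => Subtype.ext ((reachable_iff hT hB).1 p.reachable)
  invFun m := (Meander T B).connectedComponentMk
    ⟨m, by have := Nat.gcd_le_left b (T.pos_of_blocks_eq_pair hT).1; omega⟩
  left_inv := SimpleGraph.ConnectedComponent.ind fun v =>
    SimpleGraph.ConnectedComponent.sound <| (reachable_iff hT hB).2 <|
      foldMod_of_two_mul_add_one_le (two_mul_foldMod_add_one_le
        (T.gcd_pos_of_blocks_eq_pair hT) v)
  right_inv m := Subtype.ext (foldMod_of_two_mul_add_one_le m.2)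

theorem seaweedInd_eq (hT : T.blocks = [a, b]) (hB : B.blocks = [a + b]) :
    seaweedInd T B = Nat.gcd a b - 1 := by
  let E := componentEquiv hT hB
  have hcyc : ∀ c, IsCycleComp T B c ↔ 2 * (E c : ℕ) + 1 < Nat.gcd a b :=
    SimpleGraph.ConnectedComponent.ind fun v => isCycleComp_connectedComponentMk_iff hT hB
  have hC : cycleCount T B = Nat.gcd a b / 2 := by
    rw [cycleCount, Nat.card_congr (E.subtypeEquiv (q := (2 * ·.1 + 1 < Nat.gcd a b)) hcyc),
      Nat.card_congr (Equiv.subtypeSubtypeEquivSubtype (q := (2 * · + 1 < Nat.gcd a b)) le_of_lt),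
      Nat.card_two_mul_add_one_lt]
  have hP : pathCount T B = Nat.gcd a b % 2 := by
    rw [pathCount,
      Nat.card_congr (E.subtypeEquiv (q := (¬2 * ·.1 + 1 < Nat.gcd a b)) fun c => (hcyc c).not),
      Nat.card_congr (Equiv.subtypeSubtypeEquivSubtypeInter (2 * · + 1 ≤ Nat.gcd a b)
        (¬2 * · + 1 < Nat.gcd a b)),
      Nat.card_congr (Equiv.subtypeEquivRight (q := (2 * · + 1 = Nat.gcd a b)) fun m => by omega),
      Nat.card_two_mul_add_one_eq]
  rw [seaweedInd, hC, hP]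
  omega

end Meander

theorem index_two_part_parabolic (a b : ℕ) (ha : 0 < a) (hb : 0 < b) :
    seaweedInd
      (compOfList (a + b) [a, b]
        (by intro x hx; rcases List.mem_pair.mp hx with rfl | rfl <;> assumption)
        (by simp))
      (compOfList (a + b) [a + b] (by intro x hx; simp at hx; omega) (by simp)) =
    Nat.gcd a b - 1 :=
  Meander.seaweedInd_eq rfl rfl
end

section
/- Let a, b, c, d be positive integers with a + b = c + d = n. Then ind((a,b), (c,d)) = gcd(a+b, b+c) − 1, where (a,b) and (c,d) are two-part compositions of n. -/
open scoped Classical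

/-!
Identify vertex `j ∈ {1,…,n}` with `j - 1 ∈ ZMod n`. The top edges of `(a, b)` then join `x`
and `α - x` with `α = a - 1`, the bottom edges of `(c, d)` join `x` and `β - x` with
`β = c - 1`: the meander is the graph of two reflections of `ZMod n`, whose composite is
translation by `β - α ≡ b + c`. Hence `x` and `y` lie in one component iff their images in
`Q = ZMod n ⧸ ⟨b + c⟩`, a group of order `gcd(n, b + c)`, are equal or swapped by `m ↦ ᾱ - m`.
The components are thus the orbits of this involution of `Q`, and a component is a path exactly
when its orbit is a fixed point. Counting the elements of `Q` orbit by orbit gives `2C + P = |Q|`.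
-/

open AddSubgroup SimpleGraph

lemma Nat.card_eq_card_add_two_mul_card {Q C : Type*} [Finite Q] [Finite C] (p : Q → C)
    (P : C → Prop) [DecidablePred P] (h : ∀ c, Nat.card {q // p q = c} = if P c then 1 else 2) :
    Nat.card Q = Nat.card {c // P c} + 2 * Nat.card {c // ¬ P c} := by
  have := Fintype.ofFinite C
  rw [Nat.card_congr (Equiv.sigmaFiberEquiv p).symm, Nat.card_sigma]
  simp only [h, Finset.sum_ite, Finset.sum_const, smul_eq_mul, mul_one, Nat.card_eq_fintype_card,
    Fintype.card_subtype]
  ring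

lemma AddCommGroup.card_eq_or_add_eq {G : Type*} [AddCommGroup G] [DecidableEq G] (m a : G) :
    Nat.card {q : G // q = m ∨ q + m = a} = if m + m = a then 1 else 2 := by
  have hset : {q : G | q = m ∨ q + m = a} = {m, a - m} := by
    ext q
    simp [eq_sub_iff_add_eq]
  change Nat.card ({q : G | q = m ∨ q + m = a} : Set G) = _
  rw [hset, Nat.card_coe_set_eq]
  split_ifs with hm
  · simp [← hm]
  · exact Set.ncard_pair fun h => hm (eq_sub_iff_add_eq.1 h)

lemma QuotientAddGroup.mk_eq_mk_of_zmultiples_sub {X : Type*} [AddCommGroup X] (α β : X) :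
    (β : X ⧸ zmultiples (β - α)) = α :=
  QuotientAddGroup.eq_iff_sub_mem.2 (mem_zmultiples _)

lemma ZMod.finEquiv_apply (n : ℕ) [NeZero n] (v : Fin n) : ZMod.finEquiv n v = (v : ℕ) := by
  obtain ⟨m, rfl⟩ := Nat.exists_eq_succ_of_ne_zero (NeZero.ne n)
  exact (Fin.cast_val_eq_self v).symm

lemma ZMod.natCast_eq_natCast_iff_of_lt {n s t : ℕ} (hs : s < 2 * n) (ht : t < n) :
    (s : ZMod n) = t ↔ s = t ∨ s = t + n := by
  rw [ZMod.natCast_eq_natCast_iff', Nat.mod_eq_of_lt ht]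
  rcases lt_or_ge s n with h | h
  · rw [Nat.mod_eq_of_lt h]
    omega
  · rw [Nat.mod_eq_sub_mod h, Nat.mod_eq_of_lt (by omega)]
    omega

lemma ZMod.card_quotient_zmultiples_natCast (n k : ℕ) [NeZero n] :
    Nat.card (ZMod n ⧸ zmultiples (k : ZMod n)) = n.gcd k := by
  have h := (zmultiples (k : ZMod n)).index_mul_card
  rw [Nat.card_zmultiples, ZMod.addOrderOf_coe _ (NeZero.ne n), Nat.card_zmod] at h
  rw [← index_eq_card]
  have hn := NeZero.pos n
  refine Nat.eq_of_mul_eq_mul_right ?_ (h.trans (Nat.mul_div_cancel' (Nat.gcd_dvd_left n k)).symm)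
  exact Nat.div_pos (Nat.gcd_le_left k hn) (Nat.gcd_pos_of_pos_left k hn)

section ReflectionGraph

variable {X : Type*} [AddCommGroup X]

def reflectionGraph (α β : X) : SimpleGraph X where
  Adj x y := x ≠ y ∧ (x + y = α ∨ x + y = β)
  symm := ⟨fun x y h => ⟨h.1.symm, by rw [add_comm y x]; exact h.2⟩⟩
  loopless := ⟨fun _ h => h.1 rfl⟩

namespace reflectionGraph

variable {α β x y : X}

lemma reachable_of_add_eq (h : x + y = α ∨ x + y = β) :
    (reflectionGraph α β).Reachable x y := by
  by_cases hxy : x = y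
  · exact hxy ▸ Reachable.refl x
  · exact Adj.reachable ⟨hxy, h⟩

lemma reachable_add_zsmul (x : X) (k : ℤ) :
    (reflectionGraph α β).Reachable x (x + k • (β - α)) := by
  have step (x : X) : (reflectionGraph α β).Reachable x (x + (β - α)) :=
    (reachable_of_add_eq (Or.inl (add_sub_cancel x α))).trans
      (reachable_of_add_eq (Or.inr (by abel)))
  induction k using Int.induction_on generalizing x with
  | zero => simp
  | succ k ih =>
    refine (ih x).trans ?_
    convert step (x + (k : ℤ) • (β - α)) using 1
    module
  | pred k ih =>
    refine (ih x).trans ?_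
    convert (step (x + (-(k : ℤ) - 1) • (β - α))).symm using 1
    module

theorem reachable_iff :
    (reflectionGraph α β).Reachable x y ↔
      (y : X ⧸ zmultiples (β - α)) = x ∨ (x : X ⧸ zmultiples (β - α)) + y = α := by
  constructor
  · rintro ⟨p⟩
    induction p with
    | nil => exact Or.inl rfl
    | @cons x y z hxy _ ih =>
      have hxy' : (x : X ⧸ zmultiples (β - α)) + y = α := by
        rcases hxy.2 with h | h
        · rw [← h, QuotientAddGroup.mk_add]
        · rw [← QuotientAddGroup.mk_eq_mk_of_zmultiples_sub, ← h, QuotientAddGroup.mk_add]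
      rcases ih with h | h
      · exact Or.inr (h ▸ hxy')
      · exact Or.inl ((eq_sub_of_add_eq' h).trans (eq_sub_of_add_eq hxy').symm)
  · rintro (h | h)
    · obtain ⟨k, hk⟩ := mem_zmultiples_iff.1 (QuotientAddGroup.eq_iff_sub_mem.1 h)
      simpa [hk] using reachable_add_zsmul (α := α) (β := β) x k
    · have h' : ((α - x : X) : X ⧸ zmultiples (β - α)) = y := by
        rw [QuotientAddGroup.mk_sub, ← h, add_sub_cancel_left]
      obtain ⟨k, hk⟩ := mem_zmultiples_iff.1 (QuotientAddGroup.eq_iff_sub_mem.1 h'.symm)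
      refine (reachable_of_add_eq (Or.inl (add_sub_cancel x α))).trans ?_
      simpa [hk] using reachable_add_zsmul (α := α) (β := β) (α - x) k

def IsCycleComponent (α β : X) (c : (reflectionGraph α β).ConnectedComponent) : Prop :=
  ∀ x, (reflectionGraph α β).connectedComponentMk x = c → x + x ≠ α ∧ x + x ≠ β

/-- Which of the two reflections fixes `y` is decided by the parity of `k` in
`x + x - α = k • (β - α)`. -/
lemma exists_add_self_eq_of_coe_add_self_eq (h : (x : X ⧸ zmultiples (β - α)) + x = α) :
    ∃ y : X, (y : X ⧸ zmultiples (β - α)) = x ∧ (y + y = α ∨ y + y = β) := by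
  rw [← QuotientAddGroup.mk_add, QuotientAddGroup.eq_iff_sub_mem] at h
  obtain ⟨k, hk⟩ := mem_zmultiples_iff.1 h
  obtain ⟨t, ht⟩ := Int.even_or_odd' k
  have hy : ((x - t • (β - α) : X) : X ⧸ zmultiples (β - α)) = x := by
    rw [QuotientAddGroup.mk_sub,
      (QuotientAddGroup.eq_zero_iff _).2 (zsmul_mem (mem_zmultiples _) t), sub_zero]
  refine ⟨x - t • (β - α), hy, ?_⟩
  rcases ht with rfl | rfl
  · left
    linear_combination (norm := module) -hk
  · right
    linear_combination (norm := module) -hk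

lemma isCycleComponent_mk_iff :
    IsCycleComponent α β ((reflectionGraph α β).connectedComponentMk x) ↔
      (x : X ⧸ zmultiples (β - α)) + x ≠ α := by
  constructor
  · intro hcyc h
    obtain ⟨y, hy, hyy⟩ := exists_add_self_eq_of_coe_add_self_eq h
    have := hcyc y (ConnectedComponent.sound (reachable_iff.2 (Or.inl hy.symm)))
    tauto
  · intro h y hy
    have hyy : (y : X ⧸ zmultiples (β - α)) + y ≠ α := by
      rcases reachable_iff.1 (ConnectedComponent.exact hy) with hxy | hxy
      · rwa [← hxy]
      · intro hyy
        exact h (add_left_cancel (hxy.trans hyy.symm) ▸ hyy)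
    refine ⟨fun e => hyy ?_, fun e => hyy ?_⟩
    · rw [← QuotientAddGroup.mk_add, e]
    · rw [← QuotientAddGroup.mk_eq_mk_of_zmultiples_sub, ← QuotientAddGroup.mk_add, e]

theorem two_mul_card_isCycleComponent_add_card [Finite X] :
    2 * Nat.card {c // IsCycleComponent α β c} + Nat.card {c // ¬ IsCycleComponent α β c} =
      Nat.card (X ⧸ zmultiples (β - α)) := by
  let p (q : X ⧸ zmultiples (β - α)) := (reflectionGraph α β).connectedComponentMk q.out
  have hfiber (x : X) : Nat.card {q // p q = (reflectionGraph α β).connectedComponentMk x} =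
      if (x : X ⧸ zmultiples (β - α)) + x = α then 1 else 2 := by
    rw [← AddCommGroup.card_eq_or_add_eq]
    refine Nat.card_congr (Equiv.subtypeEquivRight fun q => ?_)
    rw [ConnectedComponent.eq, reachable_iff, QuotientAddGroup.out_eq', eq_comm]
  rw [Nat.card_eq_card_add_two_mul_card p (fun c => ¬ IsCycleComponent α β c) ?_]
  · simp only [not_not]
    ring
  · refine ConnectedComponent.ind fun x => ?_
    simp only [hfiber, isCycleComponent_mk_iff, not_not]

end reflectionGraph

end ReflectionGraph

lemma compEdge_compOfList_pair_iff {n a b : ℕ} (hpos : ∀ x ∈ [a, b], 0 < x)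
    (hsum : [a, b].sum = n) (j k : Fin n) :
    CompEdge (compOfList n [a, b] hpos hsum) j k ↔
      j ≠ k ∧ (j + k + 1 = a ∨ j + k + 1 = a + n) := by
  simp only [List.sum_cons, List.sum_nil, add_zero] at hsum
  unfold CompEdge
  refine and_congr_right fun _ => ⟨fun ⟨⟨i, hi⟩, h⟩ => ?_, fun h => ?_⟩
  · change i < 2 at hi
    interval_cases i <;>
      simp [compOfList, Composition.sizeUpTo, Composition.blocksFun] at h <;> omega
  · rcases h with h | h <;>
      [refine ⟨⟨0, Nat.two_pos⟩, ?_⟩; refine ⟨⟨1, Nat.one_lt_two⟩, ?_⟩] <;>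
      simp [compOfList, Composition.sizeUpTo, Composition.blocksFun] <;> omega

lemma compEdge_compOfList_pair_iff_zmod {n a b : ℕ} [NeZero n] (hpos : ∀ x ∈ [a, b], 0 < x)
    (hsum : [a, b].sum = n) (j k : Fin n) :
    CompEdge (compOfList n [a, b] hpos hsum) j k ↔
      j ≠ k ∧ ZMod.finEquiv n j + ZMod.finEquiv n k = (a : ZMod n) - 1 := by
  have hb := hpos b (by simp)
  simp only [List.sum_cons, List.sum_nil, add_zero] at hsum
  rw [compEdge_compOfList_pair_iff, ZMod.finEquiv_apply, ZMod.finEquiv_apply, eq_sub_iff_add_eq,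
    ← Nat.cast_add, ← Nat.cast_add_one, ZMod.natCast_eq_natCast_iff_of_lt (by omega) (by omega)]

lemma exists_compEdge_compOfList_pair_iff {n a b : ℕ} [NeZero n] (hpos : ∀ x ∈ [a, b], 0 < x)
    (hsum : [a, b].sum = n) (j : Fin n) :
    (∃ k, CompEdge (compOfList n [a, b] hpos hsum) j k) ↔
      ZMod.finEquiv n j + ZMod.finEquiv n j ≠ (a : ZMod n) - 1 := by
  simp only [compEdge_compOfList_pair_iff_zmod]
  constructor
  · rintro ⟨k, hne, hk⟩ h
    exact hne ((ZMod.finEquiv n).injective (add_left_cancel (h.trans hk.symm)))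
  · intro h
    refine ⟨(ZMod.finEquiv n).symm ((a : ZMod n) - 1 - ZMod.finEquiv n j), ?_, ?_⟩
    · intro hjk
      exact h (eq_sub_iff_add_eq.1 (by simpa using congrArg (ZMod.finEquiv n) hjk))
    · simp

section MeanderOfPairs

variable {n a b c d : ℕ} [NeZero n] (hposA : ∀ x ∈ [a, b], 0 < x) (hsumA : [a, b].sum = n)
  (hposB : ∀ x ∈ [c, d], 0 < x) (hsumB : [c, d].sum = n)

def meanderIsoReflectionGraph :
    Meander (compOfList n [a, b] hposA hsumA) (compOfList n [c, d] hposB hsumB) ≃g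
      reflectionGraph ((a : ZMod n) - 1) ((c : ZMod n) - 1) where
  toEquiv := (ZMod.finEquiv n).toEquiv
  map_rel_iff' := by
    simp [Meander, reflectionGraph, compEdge_compOfList_pair_iff_zmod, and_or_left]

lemma isCycleComp_iff_isCycleComponent (C : (Meander (compOfList n [a, b] hposA hsumA)
      (compOfList n [c, d] hposB hsumB)).ConnectedComponent) :
    IsCycleComp _ _ C ↔ reflectionGraph.IsCycleComponent _ _
      ((meanderIsoReflectionGraph hposA hsumA hposB hsumB).connectedComponentEquiv C) := by
  refine C.ind fun v => ?_
  refine (meanderIsoReflectionGraph hposA hsumA hposB hsumB).toEquiv.forall_congr fun w => ?_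
  refine imp_congr ?_ (and_congr (exists_compEdge_compOfList_pair_iff _ _ w)
    (exists_compEdge_compOfList_pair_iff _ _ w))
  simp only [Iso.connectedComponentEquiv_apply, ConnectedComponent.map_mk, ConnectedComponent.eq]
  exact Iso.reachable_iff.symm

theorem two_mul_cycleCount_add_pathCount_pair :
    2 * cycleCount (compOfList n [a, b] hposA hsumA) (compOfList n [c, d] hposB hsumB) +
        pathCount (compOfList n [a, b] hposA hsumA) (compOfList n [c, d] hposB hsumB) =
      n.gcd (b + c) := by
  have hδ : (c : ZMod n) - 1 - ((a : ZMod n) - 1) = ((b + c : ℕ) : ZMod n) := by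
    have hn : ((a + b : ℕ) : ZMod n) = 0 := by
      simpa [← hsumA] using ZMod.natCast_self n
    push_cast at hn ⊢
    linear_combination -hn
  let φ := (meanderIsoReflectionGraph hposA hsumA hposB hsumB).connectedComponentEquiv
  rw [cycleCount, pathCount,
    Nat.card_congr (φ.subtypeEquiv (isCycleComp_iff_isCycleComponent hposA hsumA hposB hsumB)),
    Nat.card_congr (φ.subtypeEquiv (q := (¬ reflectionGraph.IsCycleComponent _ _ ·)) fun C =>
      (isCycleComp_iff_isCycleComponent hposA hsumA hposB hsumB C).not),
    reflectionGraph.two_mul_card_isCycleComponent_add_card, hδ,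
    ZMod.card_quotient_zmultiples_natCast]

end MeanderOfPairs

theorem index_two_by_two (n a b c d : ℕ) (ha : 0 < a) (hb : 0 < b) (hc : 0 < c) (hd : 0 < d)
    (hab : a + b = n) (hcd : c + d = n) :
    seaweedInd
      (compOfList n [a, b]
        (by intro x hx; rcases List.mem_pair.mp hx with rfl | rfl <;> assumption)
        (by simp [hab]))
      (compOfList n [c, d]
        (by intro x hx; rcases List.mem_pair.mp hx with rfl | rfl <;> assumption)
        (by simp [hcd])) =
    Nat.gcd (a + b) (b + c) - 1 := by
  have : NeZero n := ⟨by omega⟩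
  rw [seaweedInd, two_mul_cycleCount_add_pathCount_pair, hab]
end

section
/- Let t ≥ 2 and k ≥ 0 be integers and set n = t·(k+1). Then the number of ordered pairs (b,c) of integers with 1 ≤ b ≤ n−1, 1 ≤ c ≤ n−1, and gcd(n, b+c) = k+1 equals (n−2)·φ(t). -/
lemma shiftA (n k1 : ℕ) : ∀ a, ((Finset.Ico a (a+n)).filter (fun s => Nat.gcd n s = k1)).card
    = ((Finset.range n).filter (fun s => Nat.gcd n s = k1)).card := by
  intro a
  induction a with
  | zero => rw [Nat.zero_add, Finset.range_eq_Ico]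
  | succ a ih =>
    rw [← ih]
    rcases Nat.eq_zero_or_pos n with h | h
    · simp [h]
    have h1 : Finset.Ico a (a+n) = insert a (Finset.Ico (a+1) (a+n)) := by
      ext x; simp [Finset.mem_Ico]; omega
    have h2 : Finset.Ico (a+1) (a+1+n) = insert (a+n) (Finset.Ico (a+1) (a+n)) := by
      ext x; simp [Finset.mem_Ico]; omega
    have hg : Nat.gcd n (a+n) = Nat.gcd n a := by
      rw [Nat.gcd_add_self_right]
    rw [h1, h2, Finset.filter_insert, Finset.filter_insert, hg]
    by_cases hp : Nat.gcd n a = k1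
    · rw [if_pos hp, if_pos hp, Finset.card_insert_of_notMem, Finset.card_insert_of_notMem]
      · simp
      · simp
    · rw [if_neg hp, if_neg hp]

lemma baseB (t k1 : ℕ) (hk1 : 0 < k1) :
    ((Finset.range (t*k1)).filter (fun s => Nat.gcd (t*k1) s = k1)).card = Nat.totient t := by
  rw [Nat.totient]
  apply Finset.card_bij (fun s _ => s / k1)
  · rintro s hs
    simp only [Finset.mem_filter, Finset.mem_range] at hs ⊢
    obtain ⟨hlt, hg⟩ := hs
    have hdvd : k1 ∣ s := hg ▸ Nat.gcd_dvd_right _ _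
    obtain ⟨u, rfl⟩ := hdvd
    rw [Nat.mul_div_cancel_left u hk1]
    constructor
    · have : k1 * u < k1 * t := by rw [mul_comm k1 t]; exact hlt
      exact lt_of_mul_lt_mul_left this (le_of_lt hk1)
    · have : Nat.gcd (t*k1) (k1*u) = k1 * Nat.gcd t u := by
        rw [mul_comm t k1, Nat.gcd_mul_left]
      rw [this] at hg
      exact Nat.eq_of_mul_eq_mul_left hk1 (by rw [hg, mul_one])
  · rintro s1 h1 s2 h2 heq
    simp only [Finset.mem_filter, Finset.mem_range] at h1 h2
    have d1 : k1 ∣ s1 := h1.2 ▸ Nat.gcd_dvd_right _ _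
    have d2 : k1 ∣ s2 := h2.2 ▸ Nat.gcd_dvd_right _ _
    obtain ⟨u1, rfl⟩ := d1; obtain ⟨u2, rfl⟩ := d2
    rw [Nat.mul_div_cancel_left _ hk1, Nat.mul_div_cancel_left _ hk1] at heq
    rw [heq]
  · rintro u hu
    simp only [Finset.mem_filter, Finset.mem_range] at hu
    refine ⟨k1 * u, ?_, ?_⟩
    · simp only [Finset.mem_filter, Finset.mem_range]
      constructor
      · calc k1 * u < k1 * t := by exact (Nat.mul_lt_mul_left hk1).mpr hu.1
          _ = t * k1 := mul_comm _ _
      · rw [mul_comm t k1, Nat.gcd_mul_left, hu.2, mul_one]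
    · rw [Nat.mul_div_cancel_left _ hk1]

theorem C22_count (t k : ℕ) (ht : 2 ≤ t) :
    (((Finset.Icc 1 (t * (k + 1) - 1)) ×ˢ (Finset.Icc 1 (t * (k + 1) - 1))).filter
        fun p => Nat.gcd (t * (k + 1)) (p.1 + p.2) = k + 1).card =
      (t * (k + 1) - 2) * Nat.totient t := by
  set k1 := k + 1 with hk1def
  set n := t * k1 with hndef
  have hk1 : 0 < k1 := Nat.succ_pos _
  have hn2 : 2 ≤ n := le_trans ht (Nat.le_mul_of_pos_right t hk1)
  have hkn : k1 < n := by
    calc k1 = 1 * k1 := (one_mul _).symm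
      _ < t * k1 := by exact (Nat.mul_lt_mul_right hk1).mpr (by omega)
  -- count over any window of n consecutive integers
  have hwin : ∀ a, ((Finset.Ico a (a+n)).filter (fun s => Nat.gcd n s = k1)).card
      = Nat.totient t := by
    intro a
    rw [shiftA, hndef, baseB t k1 hk1]
  -- per-row count plus indicator
  have hrow : ∀ b : ℕ, (((Finset.Icc 1 (n-1)).filter (fun c => Nat.gcd n (b+c) = k1)).card)
      + (if Nat.gcd n b = k1 then 1 else 0) = Nat.totient t := by
    intro b
    have himg : ((Finset.Icc 1 (n-1)).filter (fun c => Nat.gcd n (b+c) = k1)).card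
        = ((Finset.Ico (b+1) (b+n)).filter (fun s => Nat.gcd n s = k1)).card := by
      apply Finset.card_bij (fun c _ => b + c)
      · intro c hc
        simp only [Finset.mem_filter, Finset.mem_Icc, Finset.mem_Ico] at hc ⊢
        omega
      · intro c1 h1 c2 h2 heq; omega
      · intro s hs
        simp only [Finset.mem_filter, Finset.mem_Ico] at hs
        refine ⟨s - b, ?_, by omega⟩
        simp only [Finset.mem_filter, Finset.mem_Icc]
        refine ⟨by omega, ?_⟩
        rw [show b + (s - b) = s by omega]; exact hs.2
    have hins : Finset.Ico b (b+n) = insert b (Finset.Ico (b+1) (b+n)) := by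
      ext x; simp [Finset.mem_Ico]; omega
    have := hwin b
    rw [hins, Finset.filter_insert] at this
    by_cases hp : Nat.gcd n b = k1
    · rw [if_pos hp] at this
      rw [Finset.card_insert_of_notMem (by simp)] at this
      rw [himg, if_pos hp]; omega
    · rw [if_neg hp] at this
      rw [himg, if_neg hp]; omega
  -- number of b with gcd n b = k1
  have hdiag : ((Finset.Icc 1 (n-1)).filter (fun b => Nat.gcd n b = k1)).card
      = Nat.totient t := by
    have h0 : Finset.Ico 0 (0+n) = insert 0 (Finset.Icc 1 (n-1)) := by
      ext x; simp [Finset.mem_Ico, Finset.mem_Icc]; omega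
    have := hwin 0
    rw [h0, Finset.filter_insert] at this
    rw [if_neg (by simp [Nat.gcd_zero_right]; omega)] at this
    exact this
  -- expand the product
  rw [Finset.card_filter, Finset.sum_product]
  have hsum : ∀ b ∈ Finset.Icc 1 (n-1),
      (∑ c ∈ Finset.Icc 1 (n-1), if Nat.gcd n (b+c) = k1 then 1 else 0)
      = Nat.totient t - (if Nat.gcd n b = k1 then 1 else 0) := by
    intro b _
    rw [← Finset.card_filter]
    have := hrow b
    omega
  rw [Finset.sum_congr rfl hsum]
  rw [Finset.sum_tsub_distrib]
  · rw [Finset.sum_const, Nat.card_Icc, ← Finset.card_filter, hdiag]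
    simp only [smul_eq_mul]
    have hphi : 0 < Nat.totient t := Nat.totient_pos.mpr (by omega)
    have h1 : n - 1 + 1 - 1 = n - 1 := by omega
    rw [h1]
    have : n - 1 = (n - 2) + 1 := by omega
    rw [this, add_mul, one_mul]
    omega
  · intro b _
    split <;> [exact Nat.totient_pos.mpr (by omega); exact Nat.zero_le _]
end

section
/- Let a = (a_1,…,a_m) and b = (b_1,…,b_t) be compositions of n with b_1 < a_1 < 2b_1 (Rotation Contraction). Set a' = (b_1, a_2,…,a_m) and b' = (2b_1 − a_1, b_2,…,b_t), which are compositions of n − (a_1 − b_1). Then M(a|b) and M(a'|b') have the same number of cycle components and the same number of path components; in particular ind(a,b) = ind(a',b'). -/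
open scoped Classical

/-!
Write `a₁ = c + 2d` and `b₁ = c + d`. Each of the first `d` vertices `u` (counted from `0`)
lies in the middle of the path `c + d - 1 - u —bottom— u —top— c + 2d - 1 - u`. Contracting
`u` onto its top partner and shifting all vertices down by `d` maps `M(a|b)` to `M(a'|b')`,
and `w ↦ w + d` maps back; both send edges to connected pairs (a first-block edge becomes a
walk of length at most three through the first blocks) and are mutually inverse up to
reachability, so they identify the components. A component is a path iff it contains a
vertex missing a top or a bottom edge, i.e. the midpoint of an odd block. Away from the first
blocks these midpoints just shift by `d`; the midpoint of the top block `c + 2d` corresponds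
to that of the bottom block `c`, and the midpoint of the bottom block `c + d` to that of the
top block `c + d`.
-/

namespace Composition

variable {n y : ℕ} {t : List ℕ} {x : Composition n}

lemma length_eq_of_blocks_eq_cons (hx : x.blocks = y :: t) : x.length = t.length + 1 := by
  simp [Composition.length, hx]

lemma eq_add_sum_of_blocks_eq_cons (hx : x.blocks = y :: t) : n = y + t.sum := by
  rw [← x.blocks_sum, hx, List.sum_cons]

lemma sizeUpTo_succ_of_blocks_eq_cons (hx : x.blocks = y :: t) (k : ℕ) :
    x.sizeUpTo (k + 1) = y + (t.take k).sum := by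
  rw [Composition.sizeUpTo, hx, List.take_succ_cons, List.sum_cons]

lemma sizeUpTo_one_of_blocks_eq_cons (hx : x.blocks = y :: t) : x.sizeUpTo 1 = y := by
  simpa using sizeUpTo_succ_of_blocks_eq_cons hx 0

end Composition

open Composition

section CompEdge

variable {n n' y y' : ℕ} {t : List ℕ} {x : Composition n} {x' : Composition n'}

lemma compEdge_iff_of_lt_head (hx : x.blocks = y :: t) {j k : Fin n} (hj : (j : ℕ) < y) :
    CompEdge x j k ↔ j ≠ k ∧ (j : ℕ) + k + 1 = y := by
  have hS₁ := sizeUpTo_one_of_blocks_eq_cons hx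
  constructor
  · rintro ⟨hne, ⟨_ | i, hi⟩, h₁, h₂, h₃, h₄, h₅⟩
    · have := x.sizeUpTo_succ' ⟨0, hi⟩
      simp only [x.sizeUpTo_zero, zero_add] at *
      omega
    · have := x.monotone_sizeUpTo (show 1 ≤ i + 1 by omega)
      simp only at h₁
      omega
  · rintro ⟨hne, hsum⟩
    have hlen : 0 < x.length := by rw [length_eq_of_blocks_eq_cons hx]; omega
    have := x.sizeUpTo_succ' ⟨0, hlen⟩
    refine ⟨hne, ⟨0, hlen⟩, ?_⟩
    simp only [x.sizeUpTo_zero, zero_add] at *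
    omega

lemma CompEdge.head_le (hx : x.blocks = y :: t) {j k : Fin n} (h : CompEdge x j k)
    (hj : y ≤ j) : y ≤ k := by
  by_contra! hk
  have := ((compEdge_iff_of_lt_head hx hk).1 h.symm).2
  omega

lemma CompEdge.shift (hx : x.blocks = y :: t) (hx' : x'.blocks = y' :: t) {j k : Fin n}
    {j' k' : Fin n'} (hj : (j : ℕ) + y' = j' + y) (hk : (k : ℕ) + y' = k' + y) (hyj : y ≤ j)
    (h : CompEdge x j k) : CompEdge x' j' k' := by
  have hyk := h.head_le hx hyj
  obtain ⟨hne, ⟨_ | i, hi⟩, h₁, h₂, h₃, h₄, h₅⟩ := h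
  · have := sizeUpTo_one_of_blocks_eq_cons hx
    simp only [zero_add] at h₂
    omega
  · have hi' : i + 1 < x'.length := by
      rw [length_eq_of_blocks_eq_cons hx'] at *
      rwa [length_eq_of_blocks_eq_cons hx] at hi
    have := x.sizeUpTo_succ' ⟨i + 1, hi⟩
    have := x'.sizeUpTo_succ' ⟨i + 1, hi'⟩
    have := sizeUpTo_succ_of_blocks_eq_cons hx i
    have := sizeUpTo_succ_of_blocks_eq_cons hx (i + 1)
    have := sizeUpTo_succ_of_blocks_eq_cons hx' i
    have := sizeUpTo_succ_of_blocks_eq_cons hx' (i + 1)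
    refine ⟨fun h => hne (Fin.ext (by have := congrArg Fin.val h; omega)), ⟨i + 1, hi'⟩, ?_⟩
    simp only at *
    omega

lemma not_exists_compEdge_iff_of_lt_head (hx : x.blocks = y :: t) {j : Fin n}
    (hj : (j : ℕ) < y) : (¬∃ k, CompEdge x j k) ↔ 2 * (j : ℕ) + 1 = y := by
  simp only [compEdge_iff_of_lt_head hx hj, not_exists, not_and]
  constructor
  · intro h
    have := eq_add_sum_of_blocks_eq_cons hx
    by_contra hmid
    exact h ⟨y - 1 - j, by omega⟩ (fun h => hmid (by have := congrArg Fin.val h; grind))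
      (by grind)
  · intro hmid k hne hsum
    exact hne (Fin.ext (by omega))

lemma exists_compEdge_of_shift (hx : x.blocks = y :: t) (hx' : x'.blocks = y' :: t)
    {j : Fin n} {j' : Fin n'} (hj : (j : ℕ) + y' = j' + y) (hyj : y ≤ j) :
    (∃ k, CompEdge x j k) → ∃ k', CompEdge x' j' k' := by
  rintro ⟨k, hk⟩
  have := hk.head_le hx hyj
  have := eq_add_sum_of_blocks_eq_cons hx
  have := eq_add_sum_of_blocks_eq_cons hx'
  exact ⟨⟨k + y' - y, by omega⟩, hk.shift hx hx' hj (by grind) hyj⟩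

end CompEdge

namespace SimpleGraph

variable {V W : Type*} {G : SimpleGraph V} {H : SimpleGraph W}

lemma Reachable.map_of_adj (f : V → W) (hf : ∀ u v, G.Adj u v → H.Reachable (f u) (f v))
    {u v : V} (h : G.Reachable u v) : H.Reachable (f u) (f v) := by
  rw [reachable_iff_reflTransGen] at h ⊢
  exact h.lift' f fun u v huv => (reachable_iff_reflTransGen _ _).1 (hf u v huv)

def connectedComponentEquivOfReachable (f : V → W) (g : W → V)
    (hf : ∀ u v, G.Adj u v → H.Reachable (f u) (f v))
    (hg : ∀ u v, H.Adj u v → G.Reachable (g u) (g v))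
    (hgf : ∀ v, G.Reachable (g (f v)) v) (hfg : ∀ w, H.Reachable (f (g w)) w) :
    G.ConnectedComponent ≃ H.ConnectedComponent where
  toFun := ConnectedComponent.lift (fun v => H.connectedComponentMk (f v))
    fun _ _ p _ => ConnectedComponent.sound (p.reachable.map_of_adj f hf)
  invFun := ConnectedComponent.lift (fun w => G.connectedComponentMk (g w))
    fun _ _ p _ => ConnectedComponent.sound (p.reachable.map_of_adj g hg)
  left_inv := ConnectedComponent.ind fun v => ConnectedComponent.sound (hgf v)
  right_inv := ConnectedComponent.ind fun w => ConnectedComponent.sound (hfg w)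

lemma exists_mk_eq_and_iff_of_reachable (f : V → W) (g : W → V)
    (hf : ∀ u v, G.Adj u v → H.Reachable (f u) (f v))
    (hg : ∀ u v, H.Adj u v → G.Reachable (g u) (g v))
    (hgf : ∀ v, G.Reachable (g (f v)) v) (hfg : ∀ w, H.Reachable (f (g w)) w)
    {P : V → Prop} {Q : W → Prop} (hPQ : ∀ v, P v → ∃ w, Q w ∧ H.Reachable (f v) w)
    (hQP : ∀ w, Q w → ∃ v, P v ∧ G.Reachable (g w) v) (C : G.ConnectedComponent) :
    (∃ v, G.connectedComponentMk v = C ∧ P v) ↔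
      ∃ w, H.connectedComponentMk w = connectedComponentEquivOfReachable f g hf hg hgf hfg C ∧
        Q w := by
  set e := connectedComponentEquivOfReachable f g hf hg hgf hfg
  constructor
  · rintro ⟨v, rfl, hv⟩
    obtain ⟨w, hw, hvw⟩ := hPQ v hv
    exact ⟨w, (ConnectedComponent.sound hvw).symm, hw⟩
  · rintro ⟨w, hw, hQ⟩
    obtain ⟨v, hv, hwv⟩ := hQP w hQ
    refine ⟨v, ?_, hv⟩
    rw [← e.symm_apply_apply C, ← hw]
    exact (ConnectedComponent.sound hwv).symm

end SimpleGraph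

open SimpleGraph

def IsEndpoint {n : ℕ} (a b : Composition n) (v : Fin n) : Prop :=
  (¬∃ w, CompEdge a v w) ∨ ¬∃ w, CompEdge b v w

lemma not_isCycleComp_iff {n : ℕ} {a b : Composition n}
    {C : (Meander a b).ConnectedComponent} :
    ¬IsCycleComp a b C ↔
      ∃ v, (Meander a b).connectedComponentMk v = C ∧ IsEndpoint a b v := by
  simp only [IsCycleComp, IsEndpoint, not_forall, not_and_or, exists_prop]

namespace Meander

variable {n y : ℕ} {t : List ℕ} {a b : Composition n}

lemma reachable_of_top_head (ha : a.blocks = y :: t) {u v : Fin n} (h : (u : ℕ) + v + 1 = y) :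
    (Meander a b).Reachable u v := by
  obtain rfl | huv := eq_or_ne u v
  · rfl
  · exact Adj.reachable (Or.inl ((compEdge_iff_of_lt_head ha (by omega)).2 ⟨huv, h⟩))

lemma reachable_of_bot_head (hb : b.blocks = y :: t) {u v : Fin n} (h : (u : ℕ) + v + 1 = y) :
    (Meander a b).Reachable u v := by
  obtain rfl | huv := eq_or_ne u v
  · rfl
  · exact Adj.reachable (Or.inr ((compEdge_iff_of_lt_head hb (by omega)).2 ⟨huv, h⟩))

end Meander

namespace RotationContraction

variable {n c d : ℕ} {as bs : List ℕ} {a b : Composition (n + d)} {a' b' : Composition n}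

/-- The vertex map `M(a|b) → M(a'|b')`: shift down by `d`, after first moving each of the
`d` deleted vertices `u < d` along its top edge to `c + 2d - 1 - u`. -/
def contractVertex (hcd : c + d ≤ n) (u : Fin (n + d)) : Fin n :=
  if (u : ℕ) < d then ⟨c + d - 1 - u, by omega⟩ else ⟨u - d, by omega⟩

variable (hcd : c + d ≤ n)

lemma val_contractVertex_of_lt {u : Fin (n + d)} (hu : (u : ℕ) < d) :
    (contractVertex hcd u : ℕ) = c + d - 1 - u := by
  simp [contractVertex, hu]

lemma val_contractVertex_of_le {u : Fin (n + d)} (hu : d ≤ (u : ℕ)) :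
    (contractVertex hcd u : ℕ) = u - d := by
  simp [contractVertex, Nat.not_lt.2 hu]

lemma contractVertex_addNat (w : Fin n) : contractVertex hcd (w.addNat d) = w :=
  Fin.ext (by rw [val_contractVertex_of_le hcd (by simp)]; simp)

lemma reachable_addNat_contractVertex (ha : a.blocks = (c + 2 * d) :: as) (v : Fin (n + d)) :
    (Meander a b).Reachable ((contractVertex hcd v).addNat d) v := by
  by_cases hv : (v : ℕ) < d
  · have := val_contractVertex_of_lt hcd hv
    exact Meander.reachable_of_top_head ha (by grind)
  · have := val_contractVertex_of_le hcd (Nat.not_lt.1 hv)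
    rw [show (contractVertex hcd v).addNat d = v from Fin.ext (by grind)]

lemma reachable_contractVertex (ha' : a'.blocks = (c + d) :: as) (hb' : b'.blocks = c :: bs)
    {u : Fin (n + d)} {w : Fin n} (hw : (w : ℕ) = u) (hu : (u : ℕ) < c + d) :
    (Meander a' b').Reachable (contractVertex hcd u) w := by
  by_cases hud : (u : ℕ) < d
  · have := val_contractVertex_of_lt hcd hud
    exact Meander.reachable_of_top_head ha' (by omega)
  · have := val_contractVertex_of_le hcd (Nat.not_lt.1 hud)
    -- `u - d —bottom— c + d - 1 - u —top— u`
    let m : Fin n := ⟨c + d - 1 - u, by omega⟩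
    have hm : (m : ℕ) = c + d - 1 - u := rfl
    exact (Meander.reachable_of_bot_head (v := m) hb' (by omega)).trans
      (Meander.reachable_of_top_head ha' (by omega))

lemma reachable_contractVertex_of_adj (ha : a.blocks = (c + 2 * d) :: as)
    (hb : b.blocks = (c + d) :: bs) (ha' : a'.blocks = (c + d) :: as) (hb' : b'.blocks = c :: bs)
    {u v : Fin (n + d)} (h : (Meander a b).Adj u v) :
    (Meander a' b').Reachable (contractVertex hcd u) (contractVertex hcd v) := by
  rcases h with h | h
  · by_cases hu : (u : ℕ) < c + 2 * d
    · have hsum := ((compEdge_iff_of_lt_head ha hu).1 h).2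
      -- either one end is deleted and both ends have the same image, or the edge becomes a
      -- bottom edge of the first block of `b'`
      rcases lt_or_ge (u : ℕ) d with hud | hud
      · have := val_contractVertex_of_lt hcd hud
        have := val_contractVertex_of_le hcd (show d ≤ (v : ℕ) by omega)
        rw [show contractVertex hcd u = contractVertex hcd v from Fin.ext (by omega)]
      rcases lt_or_ge (v : ℕ) d with hvd | hvd
      · have := val_contractVertex_of_le hcd hud
        have := val_contractVertex_of_lt hcd hvd
        rw [show contractVertex hcd u = contractVertex hcd v from Fin.ext (by omega)]
      · have := val_contractVertex_of_le hcd hud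
        have := val_contractVertex_of_le hcd hvd
        exact Meander.reachable_of_bot_head hb' (by omega)
    · have := h.head_le ha (by omega)
      have := val_contractVertex_of_le hcd (show d ≤ (u : ℕ) by omega)
      have := val_contractVertex_of_le hcd (show d ≤ (v : ℕ) by omega)
      exact Adj.reachable (Or.inl (h.shift ha ha' (by omega) (by omega) (by omega)))
  · by_cases hu : (u : ℕ) < c + d
    · have hsum := ((compEdge_iff_of_lt_head hb hu).1 h).2
      have := (Meander.reachable_of_top_head (b := b') ha' (u := ⟨u, by omega⟩)
        (v := ⟨v, by omega⟩) (by simp only; omega))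
      exact (reachable_contractVertex hcd ha' hb' rfl hu).trans
        (this.trans (reachable_contractVertex hcd ha' hb' rfl (by omega)).symm)
    · have := h.head_le hb (by omega)
      have := val_contractVertex_of_le hcd (show d ≤ (u : ℕ) by omega)
      have := val_contractVertex_of_le hcd (show d ≤ (v : ℕ) by omega)
      exact Adj.reachable (Or.inr (h.shift hb hb' (by omega) (by omega) (by omega)))

lemma reachable_addNat_of_adj (ha : a.blocks = (c + 2 * d) :: as)
    (hb : b.blocks = (c + d) :: bs) (ha' : a'.blocks = (c + d) :: as) (hb' : b'.blocks = c :: bs)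
    {u v : Fin n} (h : (Meander a' b').Adj u v) :
    (Meander a b).Reachable (u.addNat d) (v.addNat d) := by
  rcases h with h | h
  · by_cases hu : (u : ℕ) < c + d
    · have hsum := ((compEdge_iff_of_lt_head ha' hu).1 h).2
      -- `u + d —top— v —bottom— u —top— v + d`
      exact ((Meander.reachable_of_top_head ha (v := Fin.castAdd d v) (by grind)).trans
        (Meander.reachable_of_bot_head hb (v := Fin.castAdd d u) (by grind))).trans
        (Meander.reachable_of_top_head ha (by grind))
    · exact Adj.reachable (Or.inl (h.shift ha' ha (by grind) (by grind) (by omega)))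
  · by_cases hu : (u : ℕ) < c
    · have hsum := ((compEdge_iff_of_lt_head hb' hu).1 h).2
      exact Meander.reachable_of_top_head ha (by grind)
    · exact Adj.reachable (Or.inr (h.shift hb' hb (by grind) (by grind) (by omega)))

lemma IsEndpoint.exists_reachable_contractVertex (ha : a.blocks = (c + 2 * d) :: as)
    (hb : b.blocks = (c + d) :: bs) (ha' : a'.blocks = (c + d) :: as) (hb' : b'.blocks = c :: bs)
    {v : Fin (n + d)} (hv : IsEndpoint a b v) :
    ∃ w, IsEndpoint a' b' w ∧ (Meander a' b').Reachable (contractVertex hcd v) w := by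
  rcases hv with hv | hv
  · by_cases hva : (v : ℕ) < c + 2 * d
    · have hmid := (not_exists_compEdge_iff_of_lt_head ha hva).1 hv
      have := val_contractVertex_of_le hcd (show d ≤ (v : ℕ) by omega)
      exact ⟨_, Or.inr ((not_exists_compEdge_iff_of_lt_head hb' (by omega)).2 (by omega)), .rfl⟩
    · have := val_contractVertex_of_le hcd (show d ≤ (v : ℕ) by omega)
      exact ⟨_, Or.inl (mt (exists_compEdge_of_shift ha' ha (by omega) (by omega)) hv), .rfl⟩
  · by_cases hvb : (v : ℕ) < c + d
    · have hmid := (not_exists_compEdge_iff_of_lt_head hb hvb).1 hv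
      refine ⟨⟨v, by omega⟩, Or.inl ?_, reachable_contractVertex hcd ha' hb' rfl hvb⟩
      exact (not_exists_compEdge_iff_of_lt_head ha' (by simp only; omega)).2 hmid
    · have := val_contractVertex_of_le hcd (show d ≤ (v : ℕ) by omega)
      exact ⟨_, Or.inr (mt (exists_compEdge_of_shift hb' hb (by omega) (by omega)) hv), .rfl⟩

lemma IsEndpoint.exists_reachable_addNat (ha : a.blocks = (c + 2 * d) :: as)
    (hb : b.blocks = (c + d) :: bs) (ha' : a'.blocks = (c + d) :: as) (hb' : b'.blocks = c :: bs)
    {w : Fin n} (hw : IsEndpoint a' b' w) :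
    ∃ v, IsEndpoint a b v ∧ (Meander a b).Reachable (w.addNat d) v := by
  rcases hw with hw | hw
  · by_cases hwa : (w : ℕ) < c + d
    · have hmid := (not_exists_compEdge_iff_of_lt_head ha' hwa).1 hw
      refine ⟨Fin.castAdd d w, Or.inr ?_, Meander.reachable_of_top_head ha (by grind)⟩
      exact (not_exists_compEdge_iff_of_lt_head hb (by grind)).2 (by grind)
    · exact ⟨_, Or.inl (mt (exists_compEdge_of_shift ha ha' (by grind) (by grind)) hw),
        .rfl⟩
  · by_cases hwb : (w : ℕ) < c
    · have hmid := (not_exists_compEdge_iff_of_lt_head hb' hwb).1 hw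
      exact ⟨_, Or.inl ((not_exists_compEdge_iff_of_lt_head ha (by grind)).2 (by grind)),
        .rfl⟩
    · exact ⟨_, Or.inr (mt (exists_compEdge_of_shift hb hb' (by grind) (by grind)) hw),
        .rfl⟩

end RotationContraction

open RotationContraction in
theorem cycleCount_eq_and_pathCount_eq_of_rotation {m n c d : ℕ} {as bs : List ℕ}
    {a b : Composition m} {a' b' : Composition n} (ha : a.blocks = (c + 2 * d) :: as)
    (hb : b.blocks = (c + d) :: bs) (ha' : a'.blocks = (c + d) :: as) (hb' : b'.blocks = c :: bs) :
    cycleCount a b = cycleCount a' b' ∧ pathCount a b = pathCount a' b' := by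
  have hm := eq_add_sum_of_blocks_eq_cons ha
  have hn := eq_add_sum_of_blocks_eq_cons ha'
  obtain rfl : m = n + d := by omega
  have hcd : c + d ≤ n := by omega
  have hf u v := reachable_contractVertex_of_adj hcd (u := u) (v := v) ha hb ha' hb'
  have hg u v := reachable_addNat_of_adj (u := u) (v := v) ha hb ha' hb'
  have hgf := reachable_addNat_contractVertex hcd (b := b) ha
  have hfg w : (Meander a' b').Reachable (contractVertex hcd (w.addNat d)) w := by
    rw [contractVertex_addNat]
  let e := connectedComponentEquivOfReachable _ _ hf hg hgf hfg
  have he C : IsCycleComp a b C ↔ IsCycleComp a' b' (e C) := by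
    rw [← not_iff_not, not_isCycleComp_iff, not_isCycleComp_iff]
    exact exists_mk_eq_and_iff_of_reachable _ _ hf hg hgf hfg
      (fun _ hv => hv.exists_reachable_contractVertex hcd ha hb ha' hb')
      (fun _ hw => hw.exists_reachable_addNat ha hb ha' hb') C
  exact ⟨Nat.card_congr (e.subtypeEquiv he),
    Nat.card_congr (e.subtypeEquiv fun C => (he C).not)⟩

theorem rotation_contraction (n : ℕ) (a b : Composition n) (a₁ b₁ : ℕ) (as bs : List ℕ)
    (ha : a.blocks = a₁ :: as) (hb : b.blocks = b₁ :: bs)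
    (h₁ : b₁ < a₁) (h₂ : a₁ < 2 * b₁)
    (a' b' : Composition (n - (a₁ - b₁)))
    (ha' : a'.blocks = b₁ :: as) (hb' : b'.blocks = (2 * b₁ - a₁) :: bs) :
    cycleCount a b = cycleCount a' b' ∧ pathCount a b = pathCount a' b' ∧
      seaweedInd a b = seaweedInd a' b' := by
  obtain ⟨c, d, rfl, rfl⟩ : ∃ c d, a₁ = c + 2 * d ∧ b₁ = c + d :=
    ⟨2 * b₁ - a₁, a₁ - b₁, by omega, by omega⟩
  rw [show 2 * (c + d) - (c + 2 * d) = c by omega] at hb'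
  obtain ⟨hcycle, hpath⟩ := cycleCount_eq_and_pathCount_eq_of_rotation ha hb ha' hb'
  exact ⟨hcycle, hpath, by rw [seaweedInd, seaweedInd, hcycle, hpath]⟩
end

section
/- Let a = (a_1,…,a_m) and b = (b_1,…,b_t) be compositions of n with a_1 = 2b_1 (Block Elimination); note b_1 < n, so t ≥ 2. Set a' = (b_1, a_2,…,a_m) and b' = (b_2,…,b_t), which are compositions of n − b_1. Then M(a|b) and M(a'|b') have the same number of cycle components and the same number of path components; in particular ind(a,b) = ind(a',b'). -/
open scoped Classical

/-!
The first block of `a` pairs each vertex `v < b₁` with `2b₁ - 1 - v`. Contracting these top edges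
turns `M(a|b)` into `M(a'|b')`: the merged vertex inherits the bottom edge of `v` as a top edge (the
first block of `a'`) and the bottom edge of `2b₁ - 1 - v` as its bottom edge (from `b'`).
Contracting edges inside components matches the components bijectively, and a merged vertex meets
edges of both kinds exactly when both of the vertices it replaces do, so cycles go to cycles.
-/

namespace SimpleGraph

variable {V W : Type*} {G : SimpleGraph V} {H : SimpleGraph W} {f : V → W}

/-- `H` is obtained from `G` by contracting the fibres of `f`. -/
structure IsContraction (G : SimpleGraph V) (H : SimpleGraph W) (f : V → W) : Prop where
  surjective : Function.Surjective f
  reachable_of_adj : ∀ ⦃u v⦄, G.Adj u v → H.Reachable (f u) (f v)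
  reachable_of_eq : ∀ ⦃u v⦄, f u = f v → G.Reachable u v
  exists_reachable_of_adj : ∀ ⦃x y⦄, H.Adj x y → ∃ u v, f u = x ∧ f v = y ∧ G.Reachable u v

namespace IsContraction

theorem reachable_map (hf : IsContraction G H f) {u v : V} (h : G.Reachable u v) :
    H.Reachable (f u) (f v) := by
  obtain ⟨p⟩ := h
  induction p with
  | nil => rfl
  | cons hadj _ ih => exact (hf.reachable_of_adj hadj).trans ih

theorem reachable_of_reachable_map (hf : IsContraction G H f) {u v : V}
    (h : H.Reachable (f u) (f v)) : G.Reachable u v := by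
  suffices key : ∀ x y, H.Reachable x y → ∀ u v, f u = x → f v = y → G.Reachable u v from
    key _ _ h u v rfl rfl
  rintro x y ⟨p⟩
  induction p with
  | nil => exact fun u v hu hv => hf.reachable_of_eq (hu.trans hv.symm)
  | cons hadj _ ih =>
    intro u v hu hv
    obtain ⟨u', w, hu', hw, hreach⟩ := hf.exists_reachable_of_adj hadj
    exact (hf.reachable_of_eq (hu.trans hu'.symm)).trans (hreach.trans (ih w v hw hv))

noncomputable def connectedComponentEquiv (hf : IsContraction G H f) :
    G.ConnectedComponent ≃ H.ConnectedComponent :=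
  Equiv.ofBijective
    (ConnectedComponent.lift (fun v => H.connectedComponentMk (f v))
      fun _ _ p _ => ConnectedComponent.sound (hf.reachable_map p.reachable))
    ⟨fun c d => ConnectedComponent.ind₂ (fun _ _ h =>
        ConnectedComponent.sound (hf.reachable_of_reachable_map (ConnectedComponent.exact h))) c d,
      fun c => ConnectedComponent.ind (fun x => by
        obtain ⟨v, rfl⟩ := hf.surjective x
        exact ⟨G.connectedComponentMk v, rfl⟩) c⟩

@[simp]
theorem connectedComponentEquiv_mk (hf : IsContraction G H f) (v : V) :
    hf.connectedComponentEquiv (G.connectedComponentMk v) = H.connectedComponentMk (f v) :=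
  rfl

theorem forall_mem_iff (hf : IsContraction G H f) {P : V → Prop} {Q : W → Prop}
    (hPQ : ∀ x, Q x ↔ ∀ v, f v = x → P v) (c : G.ConnectedComponent) :
    (∀ v, G.connectedComponentMk v = c → P v) ↔
      ∀ x, H.connectedComponentMk x = hf.connectedComponentEquiv c → Q x := by
  induction c using ConnectedComponent.ind with | h u => ?_
  simp only [connectedComponentEquiv_mk, hPQ, ConnectedComponent.eq]
  constructor
  · rintro h x hx v rfl
    exact h v (hf.reachable_of_reachable_map hx)
  · intro h v hv
    exact h (f v) (hf.reachable_map hv) v rfl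

end IsContraction

end SimpleGraph

/-- The partner of `j` in the block of `l` (read as consecutive blocks of `ℕ`) containing `j`;
`j` itself if it lies beyond all blocks. -/
def blockMirror : List ℕ → ℕ → ℕ
  | [], j => j
  | c :: l, j => if j < c then c - 1 - j else c + blockMirror l (j - c)

theorem blockMirror_lt_sum (l : List ℕ) {j : ℕ} (hj : j < l.sum) : blockMirror l j < l.sum := by
  induction l generalizing j with
  | nil => simp at hj
  | cons c l ih =>
    simp only [List.sum_cons] at hj ⊢
    by_cases h : j < c
    · simp only [blockMirror, if_pos h]; omega
    · simp only [blockMirror, if_neg h]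
      have := ih (j := j - c) (by omega)
      omega

theorem exists_block_iff_eq_blockMirror (l : List ℕ) {j : ℕ} (hj : j < l.sum) (k : ℕ) :
    (∃ i < l.length, (l.take i).sum ≤ j ∧ j < (l.take (i + 1)).sum ∧
      (l.take i).sum ≤ k ∧ k < (l.take (i + 1)).sum ∧
      j + k + 1 = (l.take i).sum + (l.take (i + 1)).sum) ↔ k = blockMirror l j := by
  induction l generalizing j k with
  | nil => simp at hj
  | cons c l ih =>
    simp only [List.sum_cons] at hj
    constructor
    · rintro ⟨_ | i, hi, h1, h2, h3, h4, h5⟩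
      · simp only [List.take_succ_cons, List.take_zero, List.sum_cons, List.sum_nil] at *
        simp only [blockMirror, if_pos (show j < c by omega)]
        omega
      · simp only [List.take_succ_cons, List.sum_cons, List.length_cons] at *
        simp only [blockMirror, if_neg (show ¬ j < c by omega)]
        have := (ih (j := j - c) (by omega) (k - c)).1 ⟨i, by omega, by omega, by omega, by omega,
          by omega, by omega⟩
        omega
    · intro hk
      by_cases h : j < c
      · simp only [blockMirror, if_pos h] at hk
        exact ⟨0, by simp, by simp; omega⟩
      · simp only [blockMirror, if_neg h] at hk
        obtain ⟨i, hi, h1, h2, h3, h4, h5⟩ := (ih (j := j - c) (by omega) (k - c)).2 (by omega)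
        refine ⟨i + 1, by simpa using hi, ?_⟩
        simp only [List.take_succ_cons, List.sum_cons]
        omega

section Meander

variable {n : ℕ}

theorem compEdge_iff_s17 (a : Composition n) (j k : Fin n) :
    CompEdge a j k ↔ j ≠ k ∧ (k : ℕ) = blockMirror a.blocks j := by
  have hj : (j : ℕ) < a.blocks.sum := a.blocks_sum.symm ▸ j.isLt
  rw [CompEdge, ← exists_block_iff_eq_blockMirror _ hj]
  refine and_congr_right fun _ => ⟨fun ⟨i, h⟩ => ⟨i, i.isLt, ?_⟩, fun ⟨i, hi, h⟩ => ⟨⟨i, hi⟩, ?_⟩⟩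
  · have := a.sizeUpTo_succ' i
    simp only [Composition.sizeUpTo] at h this
    omega
  · have := a.sizeUpTo_succ' ⟨i, hi⟩
    simp only [Composition.sizeUpTo] at this ⊢
    omega

theorem exists_compEdge_iff (a : Composition n) (j : Fin n) :
    (∃ k, CompEdge a j k) ↔ blockMirror a.blocks j ≠ j := by
  have hj : (j : ℕ) < a.blocks.sum := a.blocks_sum.symm ▸ j.isLt
  simp only [compEdge_iff_s17]
  constructor
  · rintro ⟨k, hne, hk⟩ h
    exact hne (Fin.ext (h.symm.trans hk.symm))
  · intro h
    have hlt : blockMirror a.blocks j < n := (blockMirror_lt_sum _ hj).trans_eq a.blocks_sum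
    exact ⟨⟨_, hlt⟩, fun e => h (congrArg Fin.val e).symm, rfl⟩

theorem meander_adj_iff (a b : Composition n) (j k : Fin n) :
    (Meander a b).Adj j k ↔
      j ≠ k ∧ ((k : ℕ) = blockMirror a.blocks j ∨ (k : ℕ) = blockMirror b.blocks j) := by
  change CompEdge a j k ∨ CompEdge b j k ↔ _
  simp only [compEdge_iff_s17, and_or_left]

theorem meander_reachable_of_eq_blockMirror (a b : Composition n) {j k : Fin n}
    (h : (k : ℕ) = j ∨ (k : ℕ) = blockMirror a.blocks j ∨ (k : ℕ) = blockMirror b.blocks j) :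
    (Meander a b).Reachable j k := by
  by_cases hjk : j = k
  · exact hjk ▸ SimpleGraph.Reachable.refl j
  · refine ((meander_adj_iff a b j k).2 ⟨hjk, h.resolve_left ?_⟩).reachable
    exact fun e => hjk (Fin.ext e.symm)

end Meander

/-- The shift `v ↦ v - β` on `v ≥ β`, extended to `v < β` through the partner `2β - 1 - v` of `v`
in a first block of size `2β`. -/
def foldBlock (β v : ℕ) : ℕ := if v < β then β - 1 - v else v - β

section FoldBlock

variable (β : ℕ) (as bs : List ℕ)

theorem foldBlock_add (x : ℕ) : foldBlock β (x + β) = x := by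
  simp [foldBlock]

theorem le_add_of_foldBlock_eq {v x : ℕ} (h : foldBlock β v = x) : v ≤ x + β := by
  unfold foldBlock at h
  split_ifs at h <;> omega

theorem foldBlock_lt {n v : ℕ} (h : 2 * β ≤ n) (hv : v < n) : foldBlock β v < n - β := by
  unfold foldBlock
  split_ifs <;> omega

theorem foldBlock_of_eq_blockMirror {v v' : ℕ}
    (h : v' = blockMirror (2 * β :: as) v ∨ v' = blockMirror (β :: bs) v) :
    foldBlock β v' = foldBlock β v ∨ foldBlock β v' = blockMirror (β :: as) (foldBlock β v) ∨
      foldBlock β v' = blockMirror bs (foldBlock β v) := by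
  -- `Nat.sub_sub` and `two_mul` make `blockMirror as (v - β - β)` and `blockMirror as (v - 2 * β)`
  -- the same atom for `omega`.
  rcases h with rfl | rfl <;> simp only [foldBlock, blockMirror] <;>
    split_ifs <;> (try simp only [Nat.sub_sub, two_mul, true_or, or_true] at *) <;> omega

theorem eq_or_eq_blockMirror_of_foldBlock_eq {u v : ℕ} (h : foldBlock β u = foldBlock β v) :
    v = u ∨ v = blockMirror (2 * β :: as) u := by
  simp only [foldBlock, blockMirror] at h ⊢
  split_ifs at h ⊢ <;> omega

theorem exists_foldBlock_eq_of_eq_blockMirror {x y : ℕ}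
    (h : y = blockMirror (β :: as) x ∨ y = blockMirror bs x) :
    ∃ u, foldBlock β u = x ∧ (foldBlock β (blockMirror (2 * β :: as) u) = y ∨
      foldBlock β (blockMirror (β :: bs) u) = y) := by
  by_cases hx : x < β
  · rcases h with rfl | rfl
    · refine ⟨β - 1 - x, ?_⟩
      simp only [foldBlock, blockMirror]
      split_ifs <;> omega
    · refine ⟨x + β, ?_⟩
      simp only [foldBlock, blockMirror, Nat.add_sub_cancel]
      split_ifs <;> omega
  · refine ⟨x + β, ?_⟩
    rcases h with rfl | rfl <;>
      simp only [foldBlock, blockMirror, Nat.add_sub_cancel, two_mul, Nat.add_sub_add_right] <;>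
      split_ifs <;> omega

theorem blockMirror_ne_iff_forall_foldBlock_eq (x : ℕ) :
    (blockMirror (β :: as) x ≠ x ∧ blockMirror bs x ≠ x) ↔
      ∀ v, foldBlock β v = x →
        blockMirror (2 * β :: as) v ≠ v ∧ blockMirror (β :: bs) v ≠ v := by
  constructor
  · rintro ⟨h1, h2⟩ v rfl
    simp only [foldBlock, blockMirror] at h1 h2 ⊢
    split_ifs at h1 h2 ⊢ <;> (try simp only [Nat.sub_sub, two_mul] at *) <;> omega
  · intro h
    have hup := h (x + β) (foldBlock_add β x)
    by_cases hx : x < β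
    · have hlow := h (β - 1 - x) (by simp only [foldBlock]; split_ifs <;> omega)
      simp only [blockMirror, Nat.add_sub_cancel] at hup hlow ⊢
      split_ifs at hup hlow ⊢ <;> omega
    · simp only [blockMirror, Nat.add_sub_cancel, two_mul, Nat.add_sub_add_right] at hup ⊢
      split_ifs at hup ⊢ <;> omega

end FoldBlock

def foldBlockFin {n β : ℕ} (h : 2 * β ≤ n) (v : Fin n) : Fin (n - β) :=
  ⟨foldBlock β v, foldBlock_lt β h v.isLt⟩

section BlockElimination

variable {n β : ℕ} {as bs : List ℕ} {a b : Composition n} {a' b' : Composition (n - β)}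

theorem isContraction_foldBlockFin (h : 2 * β ≤ n) (ha : a.blocks = 2 * β :: as)
    (hb : b.blocks = β :: bs) (ha' : a'.blocks = β :: as) (hb' : b'.blocks = bs) :
    (Meander a b).IsContraction (Meander a' b') (foldBlockFin h) where
  surjective x := ⟨⟨x + β, by omega⟩, Fin.ext (foldBlock_add β x)⟩
  reachable_of_adj u v huv := by
    obtain ⟨-, hv⟩ := (meander_adj_iff a b u v).1 huv
    rw [ha, hb] at hv
    apply meander_reachable_of_eq_blockMirror
    rw [ha', hb']
    exact foldBlock_of_eq_blockMirror β as bs hv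
  reachable_of_eq u v huv := by
    apply meander_reachable_of_eq_blockMirror
    rw [ha]
    exact (eq_or_eq_blockMirror_of_foldBlock_eq β as (congrArg Fin.val huv)).imp_right Or.inl
  exists_reachable_of_adj x y hxy := by
    obtain ⟨-, hy⟩ := (meander_adj_iff a' b' x y).1 hxy
    rw [ha', hb'] at hy
    obtain ⟨u, hu, hv⟩ := exists_foldBlock_eq_of_eq_blockMirror β as bs hy
    have hun : u < n := (le_add_of_foldBlock_eq β hu).trans_lt (by omega)
    rcases hv with hv | hv
    · refine ⟨⟨u, hun⟩, ⟨_, (le_add_of_foldBlock_eq β hv).trans_lt (by omega)⟩, Fin.ext hu,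
        Fin.ext hv, meander_reachable_of_eq_blockMirror a b ?_⟩
      rw [ha]
      exact Or.inr (Or.inl rfl)
    · refine ⟨⟨u, hun⟩, ⟨_, (le_add_of_foldBlock_eq β hv).trans_lt (by omega)⟩, Fin.ext hu,
        Fin.ext hv, meander_reachable_of_eq_blockMirror a b ?_⟩
      rw [hb]
      exact Or.inr (Or.inr rfl)

theorem isCycleComp_iff_foldBlockFin (h : 2 * β ≤ n) (ha : a.blocks = 2 * β :: as)
    (hb : b.blocks = β :: bs) (ha' : a'.blocks = β :: as) (hb' : b'.blocks = bs)
    (c : (Meander a b).ConnectedComponent) :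
    IsCycleComp a b c ↔
      IsCycleComp a' b' ((isContraction_foldBlockFin h ha hb ha' hb').connectedComponentEquiv c) := by
  refine (isContraction_foldBlockFin h ha hb ha' hb').forall_mem_iff (fun x => ?_) c
  simp only [exists_compEdge_iff, ha, hb, ha', hb']
  rw [blockMirror_ne_iff_forall_foldBlock_eq]
  constructor
  · exact fun hx v hv => hx v (congrArg Fin.val hv)
  · exact fun hx v hv => hx ⟨v, (le_add_of_foldBlock_eq β hv).trans_lt (by omega)⟩ (Fin.ext hv)

end BlockElimination

theorem block_elimination (n : ℕ) (a b : Composition n) (a₁ b₁ : ℕ) (as bs : List ℕ)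
    (ha : a.blocks = a₁ :: as) (hb : b.blocks = b₁ :: bs)
    (h₁ : a₁ = 2 * b₁)
    (a' b' : Composition (n - b₁))
    (ha' : a'.blocks = b₁ :: as) (hb' : b'.blocks = bs) :
    cycleCount a b = cycleCount a' b' ∧ pathCount a b = pathCount a' b' ∧
      seaweedInd a b = seaweedInd a' b' := by
  subst h₁
  have h : 2 * b₁ ≤ n := a.blocks_le (ha ▸ List.mem_cons_self)
  let e := (isContraction_foldBlockFin h ha hb ha' hb').connectedComponentEquiv
  have hcycle := isCycleComp_iff_foldBlockFin h ha hb ha' hb'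
  have hC : cycleCount a b = cycleCount a' b' := Nat.card_congr (e.subtypeEquiv hcycle)
  have hP : pathCount a b = pathCount a' b' :=
    Nat.card_congr (e.subtypeEquiv fun c => (hcycle c).not)
  exact ⟨hC, hP, by rw [seaweedInd, seaweedInd, hC, hP]⟩
end
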